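/- arXiv:1711.06965 — 6 statements merged into one kernel-verified Lean document; each statement's English description precedes it below -/
import Mathlib

section
/- The subgroup of SL(2,ℤ) generated by the two matrices S = (0 −1; 1 1) and T = (1 2; 0 1) is exactly Γ_o, and Γ_o has index 2 in SL(2,ℤ). -/
/-- The mod-2 condition defining the group `Γ_o`: the entries of the matrix are
congruent mod 2 to one of `(1 0; 0 1)`, `(0 1; 1 1)`, `(1 1; 1 0)`. -/
def GammaOmod2 (a b c d : ℤ) : Prop :=
  ((a : ZMod 2), (b : ZMod 2), (c : ZMod 2), (d : ZMod 2)) ∈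
    ({(1, 0, 0, 1), (0, 1, 1, 1), (1, 1, 1, 0)} :
      Set (ZMod 2 × ZMod 2 × ZMod 2 × ZMod 2))

/-- Membership in `Γ_o` for an element of `SL(2,ℤ)`. -/
def IsGammaO (M : Matrix.SpecialLinearGroup (Fin 2) ℤ) : Prop :=
  GammaOmod2 (M.1 0 0) (M.1 0 1) (M.1 1 0) (M.1 1 1)

/-- The matrix `S = (0 -1; 1 1)` in `SL(2,ℤ)`. -/
def Smat : Matrix.SpecialLinearGroup (Fin 2) ℤ :=
  ⟨!![0, -1; 1, 1], by norm_num [Matrix.det_fin_two_of]⟩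

/-- The matrix `T = (1 2; 0 1)` in `SL(2,ℤ)`. -/
def Tmat : Matrix.SpecialLinearGroup (Fin 2) ℤ :=
  ⟨!![1, 2; 0, 1], by norm_num [Matrix.det_fin_two_of]⟩

/-!
Reducing mod 2, the residues allowed by `Γ_o` form the cyclic subgroup of order 3 of
`SL(2, 𝔽₂)`, so `Γ_o` is a subgroup; it contains `Smat` and `Tmat` but not Mathlib's
`T = (1 1; 0 1)`. Conversely, Mathlib's `S = (0 -1; 1 0)` and `T` generate `SL(2, ℤ)`,
`S = Smat * T⁻¹`, `T² = Tmat`, and conjugation by `T` preserves `⟨Smat, Tmat⟩`. Hence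
`⟨Smat, Tmat⟩` is normal with quotient generated by the image of `T`, which has order 2.
A subgroup of index 2 inside the proper subgroup `Γ_o` must be all of `Γ_o`.
-/

namespace Subgroup

variable {G : Type*} [Group G]

theorem mem_normalizer_closure_of_conj_mem {s : Set G} {g : G}
    (hg : ∀ x ∈ s, g * x * g⁻¹ ∈ closure s) (hg' : ∀ x ∈ s, g⁻¹ * x * g ∈ closure s) :
    g ∈ normalizer (closure s : Set G) := by
  rw [mem_normalizer_iff_map_conj_eq, MonoidHom.map_closure]
  refine le_antisymm ((closure_le _).2 ?_) ((closure_le _).2 fun x hx => ?_)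
  · rintro _ ⟨x, hx, rfl⟩
    exact hg x hx
  · rw [← MonoidHom.map_closure]
    exact ⟨g⁻¹ * x * g, hg' x hx, by simp [mul_assoc]⟩

theorem index_eq_two_of_sup_zpowers_eq_top {H : Subgroup G} {g : G}
    (hg : g ∈ normalizer (H : Set G)) (hgH : g ∉ H) (hg2 : g ^ 2 ∈ H)
    (hsup : H ⊔ zpowers g = ⊤) : H.index = 2 := by
  have : H.Normal := normalizer_eq_top_iff.1 <| top_le_iff.1 <|
    hsup ▸ sup_le le_normalizer (zpowers_le.2 hg)
  have hq : zpowers (QuotientGroup.mk' H g) = ⊤ := by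
    rw [← MonoidHom.map_zpowers (QuotientGroup.mk' H), ← bot_sup_eq (map _ _),
      ← QuotientGroup.map_mk'_self H, ← map_sup, hsup, ← MonoidHom.range_eq_map,
      QuotientGroup.range_mk']
  have hq2 : orderOf (QuotientGroup.mk' H g) = 2 := orderOf_eq_prime
    ((QuotientGroup.eq_one_iff _).2 hg2) (mt (QuotientGroup.eq_one_iff _).1 hgH)
  rw [index, ← card_top, ← hq, Nat.card_zpowers, hq2]

theorem eq_of_le_of_index_eq_two {H K : Subgroup G} (hHK : H ≤ K) (hH : H.index = 2)
    (hK : K ≠ ⊤) : H = K := by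
  have hdvd := relIndex_mul_index hHK
  rcases Nat.prime_two.eq_one_or_self_of_dvd _ (hH ▸ Dvd.intro_left _ hdvd) with h | h
  · exact absurd (index_eq_one.1 h) hK
  · exact le_antisymm hHK (relIndex_eq_one.1 (by rw [h, hH] at hdvd; omega))

end Subgroup

open Matrix ModularGroup Subgroup
open scoped MatrixGroups

def gammaOResidues : Finset (ZMod 2 × ZMod 2 × ZMod 2 × ZMod 2) :=
  {(1, 0, 0, 1), (0, 1, 1, 1), (1, 1, 1, 0)}

theorem gammaOmod2_iff {a b c d : ℤ} :
    GammaOmod2 a b c d ↔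
      ((a : ZMod 2), (b : ZMod 2), (c : ZMod 2), (d : ZMod 2)) ∈ gammaOResidues := by
  simp [GammaOmod2, gammaOResidues]

theorem gammaOResidues_mul : ∀ p ∈ gammaOResidues, ∀ q ∈ gammaOResidues,
    (p.1 * q.1 + p.2.1 * q.2.2.1, p.1 * q.2.1 + p.2.1 * q.2.2.2,
      p.2.2.1 * q.1 + p.2.2.2 * q.2.2.1, p.2.2.1 * q.2.1 + p.2.2.2 * q.2.2.2) ∈ gammaOResidues := by
  decide

theorem gammaOResidues_adjugate : ∀ p ∈ gammaOResidues,
    (p.2.2.2, -p.2.1, -p.2.2.1, p.1) ∈ gammaOResidues := by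
  decide

theorem gammaOmod2_mul {a b c d a' b' c' d' : ℤ} (h : GammaOmod2 a b c d)
    (h' : GammaOmod2 a' b' c' d') :
    GammaOmod2 (a * a' + b * c') (a * b' + b * d') (c * a' + d * c') (c * b' + d * d') := by
  rw [gammaOmod2_iff] at *
  push_cast
  exact gammaOResidues_mul _ h _ h'

theorem gammaOmod2_adjugate {a b c d : ℤ} (h : GammaOmod2 a b c d) :
    GammaOmod2 d (-b) (-c) a := by
  rw [gammaOmod2_iff] at *
  push_cast
  exact gammaOResidues_adjugate _ h

def GammaO : Subgroup SL(2, ℤ) where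
  carrier := {M | IsGammaO M}
  one_mem' := by simp [IsGammaO, GammaOmod2]
  mul_mem' {A B} hA hB := by
    simpa [IsGammaO, Matrix.mul_apply, Fin.sum_univ_two] using gammaOmod2_mul hA hB
  inv_mem' {A} hA := by
    change IsGammaO A⁻¹
    simpa [IsGammaO, SpecialLinearGroup.SL2_inv_expl] using gammaOmod2_adjugate hA

theorem mem_GammaO {M : SL(2, ℤ)} : M ∈ GammaO ↔ IsGammaO M := Iff.rfl

theorem coe_Smat : ↑Smat = !![(0 : ℤ), -1; 1, 1] := rfl

theorem coe_Tmat : ↑Tmat = !![(1 : ℤ), 2; 0, 1] := rfl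

theorem Smat_mem_GammaO : Smat ∈ GammaO := by
  simp [mem_GammaO, IsGammaO, gammaOmod2_iff, coe_Smat, gammaOResidues]

theorem Tmat_mem_GammaO : Tmat ∈ GammaO := by
  simp +decide [mem_GammaO, IsGammaO, gammaOmod2_iff, coe_Tmat]

theorem T_notMem_GammaO : T ∉ GammaO := by
  simp [mem_GammaO, IsGammaO, gammaOmod2_iff, coe_T, gammaOResidues]

theorem S_eq_Smat_mul_T_inv : S = Smat * T⁻¹ :=
  Subtype.ext <| by simp [coe_S, coe_Smat]

theorem T_sq : T ^ 2 = Tmat :=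
  Subtype.ext <| by simp [pow_two, coe_T, coe_Tmat]

theorem commute_T_Tmat : Commute T Tmat :=
  T_sq ▸ Commute.self_pow T 2

theorem T_mul_Smat_mul_T_inv : T * Smat * T⁻¹ = Tmat * Smat ^ 2 :=
  Subtype.ext <| by simp [pow_two, coe_T, coe_Smat, coe_Tmat]

theorem T_inv_mul_Smat_mul_T : T⁻¹ * Smat * T = Smat ^ 2 * Tmat :=
  Subtype.ext <| by simp [pow_two, coe_T, coe_Smat, coe_Tmat]

theorem T_mem_normalizer : T ∈ normalizer (Subgroup.closure {Smat, Tmat} : Set SL(2, ℤ)) := by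
  refine mem_normalizer_closure_of_conj_mem ?_ ?_ <;> rintro x (rfl | rfl)
  · rw [T_mul_Smat_mul_T_inv]
    exact mul_mem (subset_closure (by simp)) (pow_mem (subset_closure (by simp)) 2)
  · rw [commute_T_Tmat.eq, mul_inv_cancel_right]
    exact subset_closure (by simp)
  · rw [T_inv_mul_Smat_mul_T]
    exact mul_mem (pow_mem (subset_closure (by simp)) 2) (subset_closure (by simp))
  · rw [mul_assoc, ← commute_T_Tmat.eq, inv_mul_cancel_left]
    exact subset_closure (by simp)

theorem closure_Smat_Tmat_sup_zpowers_T : Subgroup.closure {Smat, Tmat} ⊔ zpowers T = ⊤ := by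
  rw [eq_top_iff, ← SpecialLinearGroup.SL2Z_generators, closure_le]
  rintro x (rfl | rfl)
  · rw [S_eq_Smat_mul_T_inv]
    exact mul_mem (mem_sup_left (subset_closure (by simp)))
      (mem_sup_right (inv_mem (mem_zpowers T)))
  · exact mem_sup_right (mem_zpowers T)

/-- The subgroup of `SL(2,ℤ)` generated by `S = (0 -1; 1 1)` and `T = (1 2; 0 1)`
is exactly `Γ_o`, and `Γ_o` has index `2` in `SL(2,ℤ)`. -/
theorem generated_eq_GammaO_and_index_two :
    (∀ M : Matrix.SpecialLinearGroup (Fin 2) ℤ,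
      M ∈ Subgroup.closure ({Smat, Tmat} :
        Set (Matrix.SpecialLinearGroup (Fin 2) ℤ)) ↔ IsGammaO M) ∧
    (Subgroup.closure ({Smat, Tmat} :
        Set (Matrix.SpecialLinearGroup (Fin 2) ℤ))).index = 2 := by
  have hle : Subgroup.closure {Smat, Tmat} ≤ GammaO := by
    rw [closure_le]
    rintro x (rfl | rfl)
    exacts [Smat_mem_GammaO, Tmat_mem_GammaO]
  have hindex : (Subgroup.closure {Smat, Tmat}).index = 2 :=
    index_eq_two_of_sup_zpowers_eq_top T_mem_normalizer (fun h => T_notMem_GammaO (hle h))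
      (T_sq ▸ subset_closure (by simp)) closure_Smat_Tmat_sup_zpowers_T
  have hGammaO := eq_of_le_of_index_eq_two hle hindex fun h => T_notMem_GammaO (h ▸ mem_top T)
  exact ⟨fun M => hGammaO ▸ mem_GammaO, hindex⟩
end

section
/- Let r ≥ 1 and let (α, β) ∈ S_o with α > 1 and α, β irrational, and suppose T̄_o^r(1/α, −β) = (1/α, −β). Then ρ_o^r(α, β) = (s·α, s·β), where s = ∏_{i=1}^{r} (−ε_o(T_o^{i−1}(1/α))) ∈ {±1}, and consequently ρ_o^{2r}(α, β) = (α, β). -/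
/-- The golden ratio `G = (1+√5)/2`. -/
noncomputable def G : ℝ := (1 + Real.sqrt 5) / 2

/-- `a_o(x)`: the unique odd integer among `⌊1/x⌋`, `⌊1/x⌋ + 1`. -/
noncomputable def aO (x : ℝ) : ℤ := if Odd ⌊1 / x⌋ then ⌊1 / x⌋ else ⌊1 / x⌋ + 1

/-- `ε_o(x) = sign(1/x − a_o(x))`. -/
noncomputable def epsO (x : ℝ) : ℝ := if 0 < 1 / x - aO x then 1 else -1

/-- The odd-continued-fraction Gauss map `T_o(x) = |1/x − a_o(x)|`. -/
noncomputable def TO (x : ℝ) : ℝ := |1 / x - aO x|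

/-- The natural extension `T̄_o(x,y) = (T_o x, ε_o(x)/(a_o(x)+y))`. -/
noncomputable def barTO (p : ℝ × ℝ) : ℝ × ℝ :=
  (TO p.1, epsO p.1 / ((aO p.1 : ℝ) + p.2))

/-- The sign of a (nonzero) real number. -/
noncomputable def sgn (t : ℝ) : ℝ := if 0 < t then 1 else -1

/-- For `|x| > 1`, the unique odd integer among `⌊|x|⌋`, `⌊|x|⌋ + 1`. -/
noncomputable def aAbsO (x : ℝ) : ℤ :=
  if Odd ⌊|x|⌋ then ⌊|x|⌋ else ⌊|x|⌋ + 1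

/-- The first-return map `ρ_o(x,y) = (g x, g y)`, `g t = 1/(sign(x)·a(x) − t)`. -/
noncomputable def rhoO (p : ℝ × ℝ) : ℝ × ℝ :=
  (1 / (sgn p.1 * (aAbsO p.1 : ℝ) - p.1), 1 / (sgn p.1 * (aAbsO p.1 : ℝ) - p.2))

/-!
Up to a sign `s = ±1`, the map `(x, y) ↦ (s/x, -s y)` carries the natural extension `T̄_o` to the
first-return map `ρ_o`: one step of `ρ_o` at `(s/x, -s y)` lands at `(s'/x', -s' y')`, where
`(x', y') = T̄_o(x, y)` and `s' = -ε_o(x) s`, because `1/x - a_o(x) = ε_o(x) T_o(x)`. This needs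
only `x > 0`, and irrationality of `α` keeps every `T_o`-iterate of `1/α` positive. Iterating,
`ρ_o^r(α, β)` is the image of `T̄_o^r(1/α, -β) = (1/α, -β)` with sign `s = ∏ (-ε_o)`, i.e.
`(s α, s β)`; applying the same conjugacy once more from sign `s` gives sign `s² = 1`.
-/

/-- The passage `(x, y) ↦ (1/x, -y)` from `Ω_o` to `S_o`, twisted by a sign `s = ±1`. -/
noncomputable def signedFlip (s : ℝ) (p : ℝ × ℝ) : ℝ × ℝ := (s / p.1, -(s * p.2))

lemma abs_epsO (x : ℝ) : |epsO x| = 1 := by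
  unfold epsO; split_ifs <;> simp

lemma epsO_mul_self (x : ℝ) : epsO x * epsO x = 1 := by
  rw [← abs_mul_abs_self, abs_epsO, one_mul]

lemma one_div_sub_aO_eq_epsO_mul_TO (x : ℝ) : 1 / x - aO x = epsO x * TO x := by
  unfold epsO TO
  split_ifs with h
  · rw [abs_of_pos h, one_mul]
  · rw [abs_of_nonpos (not_lt.mp h)]; ring

lemma irrational_TO {x : ℝ} (hx : Irrational x) : Irrational (TO x) := by
  have hu : Irrational (1 / x - aO x) := by
    rw [one_div]; exact hx.inv.sub_intCast _
  unfold TO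
  rcases abs_choice (1 / x - (aO x : ℝ)) with h | h <;> rw [h]
  exacts [hu, hu.neg]

lemma TO_pos {x : ℝ} (hx : Irrational x) : 0 < TO x :=
  abs_pos.mpr (by rw [one_div]; exact (hx.inv.sub_intCast _).ne_zero)

lemma sgn_div_of_abs_eq_one {s x : ℝ} (hs : |s| = 1) (hx : 0 < x) : sgn (s / x) = s := by
  unfold sgn
  rcases abs_eq (zero_le_one' ℝ) |>.mp hs with rfl | rfl
  · rw [if_pos (by positivity)]
  · rw [if_neg (not_lt.mpr (div_nonpos_of_nonpos_of_nonneg (by norm_num) hx.le))]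

lemma aAbsO_div_of_abs_eq_one {s x : ℝ} (hs : |s| = 1) (hx : 0 < x) :
    aAbsO (s / x) = aO x := by
  rw [aAbsO, aO, abs_div, hs, abs_of_pos hx]

lemma one_div_mul_eq_div_of_mul_self_eq_one {s t : ℝ} (hs : s * s = 1) :
    1 / (s * t) = s / t := by
  rw [one_div, mul_inv, inv_eq_of_mul_eq_one_left hs, div_eq_mul_inv]

lemma rhoO_signedFlip {s : ℝ} (hs : |s| = 1) {p : ℝ × ℝ} (hp : 0 < p.1) :
    rhoO (signedFlip s p) = signedFlip (s * -epsO p.1) (barTO p) := by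
  have hss : s * s = 1 := by rw [← abs_mul_abs_self, hs, one_mul]
  have hss' : (s * -epsO p.1) * (s * -epsO p.1) = 1 := by
    linear_combination (epsO p.1 * epsO p.1) * hss + epsO_mul_self p.1
  have hfst : s * aO p.1 - s / p.1 = (s * -epsO p.1) * TO p.1 := by
    linear_combination (-s) * one_div_sub_aO_eq_epsO_mul_TO p.1
  have hsnd : s * aO p.1 - -(s * p.2) = s * (aO p.1 + p.2) := by ring
  simp only [rhoO, signedFlip, barTO, sgn_div_of_abs_eq_one hs hp,
    aAbsO_div_of_abs_eq_one hs hp, hfst, hsnd, one_div_mul_eq_div_of_mul_self_eq_one hss,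
    one_div_mul_eq_div_of_mul_self_eq_one hss', Prod.mk.injEq, true_and]
  linear_combination (-(s / (aO p.1 + p.2))) * epsO_mul_self p.1

lemma rhoO_iterate_signedFlip {s : ℝ} (hs : |s| = 1) {p : ℝ × ℝ} (hirr : Irrational p.1)
    (hp : 0 < p.1) (k : ℕ) :
    rhoO^[k] (signedFlip s p) =
      signedFlip (s * ∏ i ∈ Finset.range k, -epsO (TO^[i] p.1)) (barTO^[k] p) := by
  induction k generalizing s p with
  | zero => simp
  | succ k ih =>
    have hs' : |s * -epsO p.1| = 1 := by rw [abs_mul, abs_neg, hs, abs_epsO, one_mul]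
    rw [Function.iterate_succ_apply, rhoO_signedFlip hs hp,
      ih hs' (irrational_TO hirr) (TO_pos hirr), Function.iterate_succ_apply, Finset.prod_range_succ']
    simp only [barTO, Function.iterate_succ_apply, Function.iterate_zero_apply, mul_assoc,
      mul_comm (-epsO p.1)]

lemma abs_prod_neg_epsO (f : ℕ → ℝ) (k : ℕ) : |∏ i ∈ Finset.range k, -epsO (f i)| = 1 := by
  rw [Finset.abs_prod]
  exact Finset.prod_eq_one fun i _ => by rw [abs_neg, abs_epsO]

theorem rhoO_iterate_of_periodic_general (r : ℕ) (α β : ℝ)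
    (hα : 1 < α) (hirrα : Irrational α)
    (hper : barTO^[r] (1 / α, -β) = (1 / α, -β)) :
    (rhoO^[r] (α, β) =
      ((∏ i ∈ Finset.range r, -epsO (TO^[i] (1 / α))) * α,
       (∏ i ∈ Finset.range r, -epsO (TO^[i] (1 / α))) * β)) ∧
    rhoO^[2 * r] (α, β) = (α, β) := by
  set p : ℝ × ℝ := (1 / α, -β)
  set s := ∏ i ∈ Finset.range r, -epsO (TO^[i] (1 / α))
  have hirr : Irrational p.1 := by rw [show p.1 = α⁻¹ from one_div α]; exact hirrα.inv
  have hpos : 0 < p.1 := by simp only [p]; positivity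
  have hs : |s| = 1 := abs_prod_neg_epsO _ r
  have hstart : (α, β) = signedFlip 1 p := by simp [signedFlip, p]
  have hfirst : rhoO^[r] (α, β) = signedFlip s p := by
    rw [hstart, rhoO_iterate_signedFlip abs_one hirr hpos, hper, one_mul]
  refine ⟨by rw [hfirst]; simp [signedFlip, p], ?_⟩
  rw [two_mul, Function.iterate_add_apply, hfirst, rhoO_iterate_signedFlip hs hirr hpos, hper,
    ← abs_mul_abs_self, hs, one_mul, hstart]

/-- Corollary 4: if `(α, β) ∈ S_o` with `α > 1` irrational, `β` irrational, and
`T̄_o^r(1/α, −β) = (1/α, −β)`, then `ρ_o^r(α,β) = (s·α, s·β)` with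
`s = ∏_{i=1}^{r}(−ε_o(T_o^{i−1}(1/α)))`, and `ρ_o^{2r}(α,β) = (α,β)`. -/
theorem rhoO_iterate_of_periodic (r : ℕ) (hr : 1 ≤ r) (α β : ℝ)
    (hα : 1 < α) (hirrα : Irrational α) (hirrβ : Irrational β)
    (hβ₁ : -G < β) (hβ₂ : β < 2 - G)
    (hper : barTO^[r] (1 / α, -β) = (1 / α, -β)) :
    (rhoO^[r] (α, β) =
      ((∏ i ∈ Finset.range r, -epsO (TO^[i] (1 / α))) * α,
       (∏ i ∈ Finset.range r, -epsO (TO^[i] (1 / α))) * β)) ∧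
    rhoO^[2 * r] (α, β) = (α, β) :=
  rhoO_iterate_of_periodic_general r α β hα hirrα hper
end

section
/- The Borel measure μ̄_o on Ω_o = (0,1)×(G−2,G) with density (x,y) ↦ (1+xy)⁻² with respect to two-dimensional Lebesgue measure is finite and T̄_o-invariant: μ̄_o(T̄_o⁻¹(E)) = μ̄_o(E) for every Borel set E ⊆ Ω_o. -/
open Set MeasureTheory

/-- The measure `μ̄_o` on `Ω_o = (0,1)×(G−2,G)` with density `(1+xy)⁻²` with
respect to the two-dimensional Lebesgue measure. -/
noncomputable def muBarO : Measure (ℝ × ℝ) :=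
  ((volume : Measure (ℝ × ℝ)).restrict (Ioo (0 : ℝ) 1 ×ˢ Ioo (G - 2) G)).withDensity
    (fun p => ENNReal.ofReal (((1 + p.1 * p.2) ^ 2)⁻¹))

/-!
On the cylinder of those `x` whose first odd digit is `(a, ε)`, `T̄_o` is the product map
`(x, y) ↦ (ε (1/x - a), ε/(a + y))`. Its Jacobian is `(x (a + y))⁻²`, and its image `(u, v)`
satisfies `1 + u v = (1 + x y)/(x (a + y))`, so the density `(1 + x y)⁻²` is carried to itself.
The cylinders partition `(0,1)` up to the points `1/k`; the images `(0,1) × ε/(a + (G-2, G))`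
partition `Ω_o` up to countably many horizontal lines, because `y ∈ (G-2, G)` makes `a` the odd
integer with `1/|v| - a ∈ (G-2, G)`. Invariance then follows from the change of variables
formula on each piece, and finiteness from `1 + x y > G - 1` on `Ω_o`.
-/

open Function
open scoped ENNReal

theorem ae_eq_of_subset_of_diff_subset {α : Type*} [MeasurableSpace α] {μ : Measure α}
    {s t N : Set α} (hst : s ⊆ t) (hN : t \ s ⊆ N) (hN₀ : μ N = 0) : s =ᵐ[μ] t :=
  ae_eq_set.2 ⟨by rw [sdiff_eq_empty.2 hst, measure_empty], measure_mono_null hN hN₀⟩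

theorem volume_prod_eq_zero_of_countable_left {s : Set ℝ} (hs : s.Countable) (t : Set ℝ) :
    volume (s ×ˢ t) = 0 := by
  rw [Measure.volume_eq_prod, Measure.prod_prod, hs.measure_zero, zero_mul]

theorem volume_prod_eq_zero_of_countable_right (s : Set ℝ) {t : Set ℝ} (ht : t.Countable) :
    volume (s ×ˢ t) = 0 := by
  rw [Measure.volume_eq_prod, Measure.prod_prod, ht.measure_zero, mul_zero]

section PiecewiseDiffeomorphism

variable {E : Type*} [NormedAddCommGroup E] [NormedSpace ℝ E] [FiniteDimensional ℝ E]
  [MeasurableSpace E] [BorelSpace E] {μ : Measure E} [μ.IsAddHaarMeasure]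
  {ι : Type*} [Countable ι] {ρ : E → ℝ≥0∞} {T : E → E} {F : ι → E → E}
  {F' : ι → E → E →L[ℝ] E} {B : ι → Set E} {Ω : Set E}

theorem measurePreserving_withDensity_of_piecewise (hT : Measurable T)
    (hB : ∀ i, MeasurableSet (B i)) (hB_disj : Pairwise (Disjoint on B))
    (hB_cover : ⋃ i, B i =ᵐ[μ] Ω) (hTF : ∀ i, EqOn T (F i) (B i))
    (hF' : ∀ i, ∀ p ∈ B i, HasFDerivWithinAt (F i) (F' i p) (B i) p)
    (hF_inj : ∀ i, InjOn (F i) (B i)) (hF_disj : Pairwise (Disjoint on fun i => F i '' B i))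
    (hF_cover : ⋃ i, F i '' B i =ᵐ[μ] Ω)
    (hρ : ∀ i, ∀ p ∈ B i, ENNReal.ofReal |(F' i p).det| * ρ (F i p) = ρ p) :
    MeasurePreserving T ((μ.restrict Ω).withDensity ρ) ((μ.restrict Ω).withDensity ρ) := by
  refine ⟨hT, Measure.ext fun S hS => ?_⟩
  have hTS : MeasurableSet (T ⁻¹' S) := hT hS
  have piece (i : ι) : ∫⁻ p in T ⁻¹' S ∩ B i, ρ p ∂μ = ∫⁻ p in S ∩ F i '' B i, ρ p ∂μ := by
    have hs : MeasurableSet (T ⁻¹' S ∩ B i) := hTS.inter (hB i)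
    have hpre : T ⁻¹' S ∩ B i = F i ⁻¹' S ∩ B i := by
      rw [inter_comm, (hTF i).inter_preimage_eq, inter_comm]
    rw [← image_preimage_inter, ← hpre, lintegral_image_eq_lintegral_abs_det_fderiv_mul μ hs
        (fun p hp => (hF' i p hp.2).mono inter_subset_right) ((hF_inj i).mono inter_subset_right)]
    exact setLIntegral_congr_fun hs fun p hp => (hρ i p hp.2).symm
  rw [Measure.map_apply hT hS, withDensity_apply _ hTS, withDensity_apply _ hS,
    Measure.restrict_restrict hTS, Measure.restrict_restrict hS]
  calc ∫⁻ p in T ⁻¹' S ∩ Ω, ρ p ∂μ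
      = ∫⁻ p in ⋃ i, T ⁻¹' S ∩ B i, ρ p ∂μ :=
        setLIntegral_congr (by rw [← inter_iUnion]; exact (ae_eq_refl _).inter hB_cover.symm)
    _ = ∑' i, ∫⁻ p in T ⁻¹' S ∩ B i, ρ p ∂μ :=
        lintegral_iUnion (fun i => hTS.inter (hB i))
          (hB_disj.mono fun _ _ h => h.mono inter_subset_right inter_subset_right) ρ
    _ = ∑' i, ∫⁻ p in S ∩ F i '' B i, ρ p ∂μ := tsum_congr piece
    _ = ∫⁻ p in ⋃ i, S ∩ F i '' B i, ρ p ∂μ :=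
        (lintegral_iUnion (fun i => hS.inter (measurable_image_of_fderivWithin (hB i) (hF' i)
          (hF_inj i))) (hF_disj.mono fun _ _ h => h.mono inter_subset_right inter_subset_right)
          ρ).symm
    _ = ∫⁻ p in S ∩ Ω, ρ p ∂μ :=
        setLIntegral_congr (by rw [← inter_iUnion]; exact (ae_eq_refl _).inter hF_cover)

end PiecewiseDiffeomorphism

section BranchMap

variable {a e : ℝ} {p : ℝ × ℝ}

noncomputable def branchMap (a e : ℝ) (p : ℝ × ℝ) : ℝ × ℝ := (e * (p.1⁻¹ - a), e / (a + p.2))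

noncomputable def branchMapDeriv (a e : ℝ) (p : ℝ × ℝ) : ℝ × ℝ →L[ℝ] ℝ × ℝ :=
  (ContinuousLinearMap.toSpanSingleton ℝ (-e / p.1 ^ 2)).prodMap
    (ContinuousLinearMap.toSpanSingleton ℝ (-e / (a + p.2) ^ 2))

theorem hasFDerivAt_branchMap (hx : p.1 ≠ 0) (hy : a + p.2 ≠ 0) :
    HasFDerivAt (branchMap a e) (branchMapDeriv a e p) p := by
  have h₁ : HasDerivAt (fun x => e * (x⁻¹ - a)) (-e / p.1 ^ 2) p.1 :=
    (((hasDerivAt_inv hx).sub_const a).const_mul e).congr_deriv (by ring)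
  have h₂ : HasDerivAt (fun y => e / (a + y)) (-e / (a + p.2) ^ 2) p.2 :=
    ((((hasDerivAt_id p.2).const_add a).inv hy).const_mul e).congr_deriv
      (by simp only [id_eq]; ring)
  exact h₁.hasFDerivAt.prodMap p h₂.hasFDerivAt

theorem det_branchMapDeriv :
    (branchMapDeriv a e p).det = e ^ 2 / (p.1 * (a + p.2)) ^ 2 := by
  rw [ContinuousLinearMap.det, branchMapDeriv, ContinuousLinearMap.coe_prodMap,
    LinearMap.det_prodMap, ← ContinuousLinearMap.det, ← ContinuousLinearMap.det,
    ContinuousLinearMap.det_toSpanSingleton, ContinuousLinearMap.det_toSpanSingleton, mul_pow,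
    div_mul_div_comm]
  ring

theorem branchMap_injective (he : e ≠ 0) : Injective (branchMap a e) := by
  intro p q h
  simp only [branchMap, Prod.ext_iff, mul_right_inj' he, div_eq_mul_inv, sub_left_inj, inv_inj,
    add_right_inj] at h
  exact Prod.ext h.1 h.2

theorem abs_det_mul_density_branchMap (he : e * e = 1) (hx : p.1 ≠ 0) (hy : a + p.2 ≠ 0) :
    |(branchMapDeriv a e p).det| *
        ((1 + (branchMap a e p).1 * (branchMap a e p).2) ^ 2)⁻¹ = ((1 + p.1 * p.2) ^ 2)⁻¹ := by
  have key : 1 + (branchMap a e p).1 * (branchMap a e p).2 =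
      (1 + p.1 * p.2) / (p.1 * (a + p.2)) := by
    simp only [branchMap]
    field_simp
    linear_combination (1 - p.1 * a) * he
  rw [det_branchMapDeriv, sq, he, key, abs_of_nonneg (by positivity)]
  field_simp

end BranchMap

theorem G_eq_goldenRatio : G = Real.goldenRatio := rfl

theorem one_lt_G : 1 < G := Real.one_lt_goldenRatio

theorem G_lt_two : G < 2 := Real.goldenRatio_lt_two

theorem inv_G : G⁻¹ = G - 1 := by
  rw [G_eq_goldenRatio, Real.inv_goldenRatio, ← Real.one_sub_goldenConj]
  ring

theorem inv_two_sub_G : (2 - G)⁻¹ = G + 1 := by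
  refine inv_eq_of_mul_eq_one_right ?_
  rw [G_eq_goldenRatio]
  linear_combination -Real.goldenRatio_sq

section Signs

theorem cast_units_mul_self (ε : ℤˣ) : (ε : ℝ) * ε = 1 := by
  rw [← Int.cast_mul, ← Units.val_mul, Int.units_mul_self, Units.val_one, Int.cast_one]

noncomputable def signUnit (t : ℝ) : ℤˣ := if 0 < t then 1 else -1

theorem signUnit_mul_self (t : ℝ) : (signUnit t : ℝ) * t = |t| := by
  unfold signUnit
  split_ifs with h
  · simp [abs_of_pos h]
  · simp [abs_of_nonpos (not_lt.1 h)]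

theorem signUnit_mul_abs (t : ℝ) : (signUnit t : ℝ) * |t| = t := by
  rw [← signUnit_mul_self, ← mul_assoc, cast_units_mul_self, one_mul]

theorem signUnit_eq_of_pos_mul {ε : ℤˣ} {t : ℝ} (h : 0 < ε * t) : signUnit t = ε := by
  rcases Int.units_eq_one_or ε with rfl | rfl <;> simp_all [signUnit, le_of_lt]

theorem abs_eq_units_mul_of_pos {ε : ℤˣ} {t : ℝ} (h : 0 < ε * t) : |t| = ε * t := by
  rw [← signUnit_mul_self, signUnit_eq_of_pos_mul h]

theorem two_le_add_of_odd_of_pos {a : ℤ} {ε : ℤˣ} (ha : Odd a) (h : 0 < a + ε) : 2 ≤ a + ε := by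
  obtain ⟨k, rfl⟩ := ha
  rcases Int.units_eq_one_or ε with rfl | rfl <;>
    simp only [Units.val_one, Units.val_neg] at h ⊢ <;> omega

theorem exists_odd_abs_sub_lt_one {t : ℝ} (ht : ∀ k : ℤ, t ≠ k) : ∃ a : ℤ, Odd a ∧ |t - a| < 1 := by
  have h₁ : (⌊t⌋ : ℝ) < t := (Int.floor_le t).lt_of_ne (ht ⌊t⌋).symm
  have h₂ : t < ⌊t⌋ + 1 := Int.lt_floor_add_one t
  rcases Int.even_or_odd ⌊t⌋ with h | h
  · exact ⟨⌊t⌋ + 1, h.add_one, by push_cast; rw [abs_lt]; constructor <;> linarith⟩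
  · exact ⟨⌊t⌋, h, by rw [abs_lt]; constructor <;> linarith⟩

theorem eq_of_units_div_eq {a b : ℤ} {ε δ : ℤˣ} {y z : ℝ} (ha : Odd a) (hb : Odd b)
    (hay : 0 < a + y) (hbz : 0 < b + z) (hyz : |y - z| < 2)
    (h : (ε : ℝ) / (a + y) = δ / (b + z)) : a = b ∧ ε = δ := by
  have hε : ε = δ := by
    have hε := signUnit_eq_of_pos_mul (ε := ε) (t := ε / (a + y))
      (by rw [mul_div_assoc', cast_units_mul_self]; positivity)
    have hδ := signUnit_eq_of_pos_mul (ε := δ) (t := δ / (b + z))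
      (by rw [mul_div_assoc', cast_units_mul_self]; positivity)
    rw [← hε, ← hδ, h]
  subst hε
  rw [div_eq_mul_inv, div_eq_mul_inv, mul_right_inj' (left_ne_zero_of_mul_eq_one
    (cast_units_mul_self ε)), inv_inj] at h
  have hab : |((a - b : ℤ) : ℝ)| < 2 := by
    rw [Int.cast_sub, show (a : ℝ) - b = z - y by linarith, abs_sub_comm]
    exact hyz
  have hab : |a - b| < 2 := by exact_mod_cast hab
  obtain ⟨k, rfl⟩ := ha
  obtain ⟨m, rfl⟩ := hb
  rw [abs_lt] at hab
  exact ⟨by omega, rfl⟩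

end Signs

section Cylinders

/-- The set of `x ∈ (0,1)` whose first odd-continued-fraction digit is `i = (a, ε)`, i.e.
`x = 1/(a + ε u)` with `u ∈ (0,1)`. -/
def digitCylinder (i : ℤ × ℤˣ) : Set ℝ :=
  {x | Odd i.1 ∧ x ∈ Ioo 0 1 ∧ (i.2 : ℝ) * (x⁻¹ - i.1) ∈ Ioo 0 1}

variable {i : ℤ × ℤˣ} {x : ℝ}

theorem measurableSet_digitCylinder (i : ℤ × ℤˣ) : MeasurableSet (digitCylinder i) := by
  by_cases ha : Odd i.1
  · simp only [digitCylinder, ha, true_and, ofPred_and]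
    exact measurableSet_Ioo.inter (measurableSet_Ioo.preimage (by fun_prop))
  · simp [digitCylinder, ha]

theorem one_lt_iff_two_le_add {a : ℤ} {ε : ℤˣ} {t : ℝ} (ha : Odd a)
    (ht : (ε : ℝ) * (t - a) ∈ Ioo 0 1) : 1 < t ↔ 2 ≤ a + ε := by
  obtain ⟨k, rfl⟩ := ha
  rcases Int.units_eq_one_or ε with rfl | rfl <;>
    simp only [mem_Ioo, Units.val_one, Units.val_neg, Int.cast_one, Int.cast_neg, one_mul,
      neg_mul] at ht <;> push_cast at ht ⊢
  · constructor <;> intro h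
    · have : (-1 : ℝ) < k := by linarith
      have : -1 < k := by exact_mod_cast this
      omega
    · have : (0 : ℝ) ≤ k := by exact_mod_cast (by omega : 0 ≤ k)
      linarith
  · constructor <;> intro h
    · have : (0 : ℝ) < k := by linarith
      have : 0 < k := by exact_mod_cast this
      omega
    · have : (1 : ℝ) ≤ k := by exact_mod_cast (by omega : 1 ≤ k)
      linarith

theorem two_le_add_of_mem_digitCylinder (hx : x ∈ digitCylinder i) : 2 ≤ i.1 + i.2 :=
  (one_lt_iff_two_le_add hx.1 hx.2.2).1 (one_lt_inv₀ hx.2.1.1 |>.2 hx.2.1.2)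

theorem aO_eq_of_abs_sub_lt_one {a : ℤ} (ha : Odd a) (h : |x⁻¹ - a| < 1) : aO x = a := by
  rw [abs_lt] at h
  rcases le_or_gt (a : ℝ) x⁻¹ with hle | hlt
  · have hfl : ⌊x⁻¹⌋ = a := by rw [Int.floor_eq_iff]; constructor <;> linarith
    simp [aO, hfl, ha]
  · have hfl : ⌊x⁻¹⌋ = a - 1 := by rw [Int.floor_eq_iff]; push_cast; constructor <;> linarith
    have : ¬ Odd (a - 1) := by rw [Int.not_odd_iff_even]; exact ha.sub_odd odd_one
    simp [aO, hfl, this]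

theorem aO_eq_of_mem_digitCylinder (hx : x ∈ digitCylinder i) : aO x = i.1 := by
  refine aO_eq_of_abs_sub_lt_one hx.1 ?_
  rw [abs_eq_units_mul_of_pos hx.2.2.1]
  exact hx.2.2.2

theorem digitCylinder_pairwise_disjoint : Pairwise (Disjoint on digitCylinder) := by
  intro i j hij
  refine disjoint_left.2 fun x hi hj => hij ?_
  have ha : i.1 = j.1 := (aO_eq_of_mem_digitCylinder hi).symm.trans (aO_eq_of_mem_digitCylinder hj)
  refine Prod.ext ha ?_
  rw [← signUnit_eq_of_pos_mul hi.2.2.1, ← signUnit_eq_of_pos_mul hj.2.2.1, ha]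

theorem exists_mem_digitCylinder (hx : x ∈ Ioo 0 1) (hx' : ∀ k : ℤ, x⁻¹ ≠ k) :
    ∃ i, x ∈ digitCylinder i := by
  obtain ⟨a, ha, h⟩ := exists_odd_abs_sub_lt_one hx'
  refine ⟨(a, signUnit (x⁻¹ - a)), ha, hx, ?_⟩
  rw [signUnit_mul_self]
  exact ⟨abs_pos.2 (sub_ne_zero.2 (hx' a)), h⟩

theorem barTO_eqOn_digitCylinder :
    EqOn barTO (branchMap i.1 i.2) (digitCylinder i ×ˢ Ioo (G - 2) G) := by
  rintro ⟨x, y⟩ ⟨hx, -⟩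
  have haO := aO_eq_of_mem_digitCylinder hx
  have hε : epsO x = i.2 := by
    rw [← signUnit_eq_of_pos_mul hx.2.2.1, epsO, haO, one_div, signUnit]
    split_ifs <;> simp
  simp only [barTO, branchMap, TO, hε, haO, one_div, abs_eq_units_mul_of_pos hx.2.2.1]

end Cylinders

section Images

variable {i : ℤ × ℤˣ} {x y : ℝ}

-- The two golden-ratio identities `G⁻¹ = G - 1` and `(2 - G)⁻¹ = G + 1` are what make
-- `(G - 2, G)` the right fibre: `ε/(a + y)` lies in it for all `y ∈ (G - 2, G)` iff `a + ε ≥ 2`.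
theorem mem_Ioo_G_iff {ε : ℤˣ} {v : ℝ} (hv : 0 < ε * v) :
    v ∈ Ioo (G - 2) G ↔ G - ε < (ε * v)⁻¹ := by
  have hG := one_lt_G
  have hG2 := G_lt_two
  rcases Int.units_eq_one_or ε with rfl | rfl <;>
    simp only [Units.val_one, Units.val_neg, Int.cast_one, Int.cast_neg, one_mul, neg_mul,
      sub_neg_eq_add, mem_Ioo] at hv ⊢
  · rw [← inv_G, inv_lt_inv₀ (by positivity) hv]
    constructor
    · exact fun h => h.2
    · exact fun h => ⟨by linarith, h⟩
  · rw [← inv_two_sub_G, inv_lt_inv₀ (by linarith) hv]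
    constructor
    · exact fun h => by linarith [h.1]
    · exact fun h => ⟨by linarith, by linarith⟩

theorem add_pos_of_mem_digitCylinder (hx : x ∈ digitCylinder i) (hy : y ∈ Ioo (G - 2) G) :
    0 < (i.1 : ℝ) + y := by
  have h2 := two_le_add_of_mem_digitCylinder hx
  have : 1 ≤ i.1 := by
    rcases Int.units_eq_one_or i.2 with h | h <;> rw [h] at h2 <;>
      simp only [Units.val_one, Units.val_neg] at h2 <;> omega
  have : (1 : ℝ) ≤ i.1 := by exact_mod_cast this
  linarith [hy.1, one_lt_G]

theorem mapsTo_branchMap (i : ℤ × ℤˣ) :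
    MapsTo (branchMap i.1 i.2) (digitCylinder i ×ˢ Ioo (G - 2) G) (Ioo 0 1 ×ˢ Ioo (G - 2) G) := by
  rintro ⟨x, y⟩ ⟨hx, hy⟩
  have hpos := add_pos_of_mem_digitCylinder hx hy
  have hv : (i.2 : ℝ) * (i.2 / (i.1 + y)) = (i.1 + y)⁻¹ := by
    rw [mul_div_assoc', cast_units_mul_self, one_div]
  refine ⟨hx.2.2, (mem_Ioo_G_iff (hv ▸ inv_pos.2 hpos)).2 ?_⟩
  have h2 : (2 : ℝ) ≤ i.1 + i.2 := by exact_mod_cast two_le_add_of_mem_digitCylinder hx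
  simp only [branchMap]
  rw [hv, inv_inv]
  linarith [hy.1]

theorem branchMap_image_pairwise_disjoint :
    Pairwise (Disjoint on fun i : ℤ × ℤˣ =>
      branchMap i.1 i.2 '' (digitCylinder i ×ˢ Ioo (G - 2) G)) := by
  intro i j hij
  refine disjoint_left.2 ?_
  rintro _ ⟨⟨x, y⟩, ⟨hx, hy⟩, rfl⟩ ⟨⟨x', y'⟩, ⟨hx', hy'⟩, h⟩
  have hyy' : |y' - y| < 2 := by rw [abs_lt]; constructor <;> linarith [hy.1, hy.2, hy'.1, hy'.2]
  obtain ⟨ha, hε⟩ := eq_of_units_div_eq hx'.1 hx.1 (add_pos_of_mem_digitCylinder hx' hy')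
    (add_pos_of_mem_digitCylinder hx hy) hyy' (Prod.ext_iff.1 h).2
  exact hij (Prod.ext ha hε).symm

end Images

section Covers

theorem exists_branchMap_eq {u v : ℝ} (hu : u ∈ Ioo 0 1) (hv : v ∈ Ioo (G - 2) G) (hv₀ : v ≠ 0)
    (hvG : ∀ k : ℤ, |v|⁻¹ ≠ k + G) :
    ∃ i : ℤ × ℤˣ, ∃ p ∈ digitCylinder i ×ˢ Ioo (G - 2) G, branchMap i.1 i.2 p = (u, v) := by
  set ε := signUnit v
  have hεv : (ε : ℝ) * v = |v| := signUnit_mul_self v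
  have hGv : G - ε < |v|⁻¹ := hεv ▸ (mem_Ioo_G_iff (hεv ▸ abs_pos.2 hv₀)).1 hv
  obtain ⟨a, ha, hav⟩ := exists_odd_abs_sub_lt_one (t := |v|⁻¹ - (G - 1))
    fun k hk => hvG (k - 1) (by push_cast; linarith)
  rw [abs_lt] at hav
  have h2 : 2 ≤ a + ε := two_le_add_of_odd_of_pos ha (by
    have : (0 : ℝ) < a + ε := by linarith
    exact_mod_cast this)
  have hu' : (ε : ℝ) * ((a + ε * u) - a) ∈ Ioo 0 1 := by
    rwa [add_sub_cancel_left, ← mul_assoc, cast_units_mul_self, one_mul]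
  have h1 : 1 < (a : ℝ) + ε * u := (one_lt_iff_two_le_add ha hu').2 h2
  refine ⟨(a, ε), ((a + ε * u)⁻¹, |v|⁻¹ - a), ⟨⟨ha, ⟨by positivity, inv_lt_one_of_one_lt₀ h1⟩,
    by rwa [inv_inv]⟩, ⟨by linarith, by linarith⟩⟩, ?_⟩
  simp only [branchMap, inv_inv, add_sub_cancel_left, ← mul_assoc, cast_units_mul_self, one_mul,
    add_sub_cancel, div_inv_eq_mul, signUnit_mul_abs, ε]

theorem iUnion_digitCylinder_prod_ae_eq :
    ⋃ i, digitCylinder i ×ˢ Ioo (G - 2) G =ᵐ[volume] Ioo 0 1 ×ˢ Ioo (G - 2) G := by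
  refine ae_eq_of_subset_of_diff_subset
    (iUnion_subset fun i => prod_mono (fun x hx => hx.2.1) subset_rfl) ?_
    (volume_prod_eq_zero_of_countable_left (countable_range fun k : ℤ => (k : ℝ)⁻¹) univ)
  rintro ⟨x, y⟩ ⟨⟨hx, hy⟩, hnot⟩
  refine ⟨?_, trivial⟩
  by_contra hk
  obtain ⟨i, hi⟩ := exists_mem_digitCylinder hx fun k h =>
    hk ⟨k, show (k : ℝ)⁻¹ = x by rw [← h, inv_inv]⟩
  exact hnot (mem_iUnion.2 ⟨i, hi, hy⟩)

theorem iUnion_branchMap_image_ae_eq :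
    ⋃ i : ℤ × ℤˣ, branchMap i.1 i.2 '' (digitCylinder i ×ˢ Ioo (G - 2) G)
      =ᵐ[volume] Ioo 0 1 ×ˢ Ioo (G - 2) G := by
  refine ae_eq_of_subset_of_diff_subset
    (iUnion_subset fun i => (mapsTo_branchMap i).image_subset) ?_
    (volume_prod_eq_zero_of_countable_right univ
      ((countable_range fun q : ℤ × ℤˣ => (q.2 : ℝ) / (q.1 + G)).insert 0))
  rintro ⟨u, v⟩ ⟨⟨hu, hv⟩, hnot⟩
  refine ⟨trivial, ?_⟩
  by_contra hN
  rw [mem_insert_iff, not_or] at hN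
  obtain ⟨i, p, hp, hpuv⟩ := exists_branchMap_eq hu hv hN.1 fun k hk =>
    hN.2 ⟨(k, signUnit v), show (signUnit v : ℝ) / (k + G) = v by
      rw [← hk, div_inv_eq_mul, signUnit_mul_abs]⟩
  exact hnot (mem_iUnion.2 ⟨i, p, hp, hpuv⟩)

end Covers

theorem measurable_aO : Measurable aO :=
  (measurable_from_top (f := fun k : ℤ => if Odd k then k else k + 1)).comp
    (Int.measurable_floor.comp (f := fun x : ℝ => 1 / x) (by fun_prop))

theorem measurable_barTO : Measurable barTO := by
  have := measurable_aO
  have hr : Measurable fun x : ℝ => 1 / x - aO x := by fun_prop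
  have : Measurable epsO :=
    Measurable.ite (measurableSet_lt measurable_const hr) measurable_const measurable_const
  unfold barTO TO
  fun_prop

theorem measurePreserving_barTO : MeasurePreserving barTO muBarO muBarO := by
  have hx {i p} (hp : p ∈ digitCylinder i ×ˢ Ioo (G - 2) G) : p.1 ≠ 0 := hp.1.2.1.1.ne'
  have hy {i p} (hp : p ∈ digitCylinder i ×ˢ Ioo (G - 2) G) : (i.1 : ℝ) + p.2 ≠ 0 :=
    (add_pos_of_mem_digitCylinder hp.1 hp.2).ne'
  refine measurePreserving_withDensity_of_piecewise (F := fun i : ℤ × ℤˣ => branchMap i.1 i.2)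
    (F' := fun i => branchMapDeriv i.1 i.2) measurable_barTO
    (fun i => (measurableSet_digitCylinder i).prod measurableSet_Ioo)
    (fun i j hij => (digitCylinder_pairwise_disjoint hij).set_prod_left _ _)
    iUnion_digitCylinder_prod_ae_eq (fun i => barTO_eqOn_digitCylinder)
    (fun i p hp => ?_) (fun i => (branchMap_injective ?_).injOn)
    branchMap_image_pairwise_disjoint iUnion_branchMap_image_ae_eq (fun i p hp => ?_)
  · exact (hasFDerivAt_branchMap (hx hp) (hy hp)).hasFDerivWithinAt
  · exact Int.cast_ne_zero.2 i.2.ne_zero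
  · rw [← ENNReal.ofReal_mul (abs_nonneg _),
      abs_det_mul_density_branchMap (cast_units_mul_self i.2) (hx hp) (hy hp)]

theorem isFiniteMeasure_muBarO : IsFiniteMeasure muBarO := by
  have hΩ : volume (Ioo (0 : ℝ) 1 ×ˢ Ioo (G - 2) G) ≠ ∞ :=
    ((Metric.isBounded_Ioo _ _).prod (Metric.isBounded_Ioo _ _)).measure_lt_top.ne
  refine isFiniteMeasure_withDensity
    (setLIntegral_lt_top_of_le_nnreal hΩ ⟨(((G - 1) ^ 2)⁻¹).toNNReal, ?_⟩).ne
  rintro ⟨x, y⟩ ⟨hx, hy⟩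
  have hG := one_lt_G
  have hxy : G - 1 < 1 + x * y := by nlinarith [hx.1, hx.2, hy.1, hy.2, G_lt_two]
  exact ENNReal.ofReal_le_ofReal
    (inv_anti₀ (by positivity) (pow_le_pow_left₀ (by linarith) hxy.le 2))

/-- `μ̄_o` is a finite `T̄_o`-invariant measure on `Ω_o`. -/
theorem muBarO_finite_and_invariant :
    IsFiniteMeasure muBarO ∧
    ∀ E : Set (ℝ × ℝ), MeasurableSet E → E ⊆ Ioo (0 : ℝ) 1 ×ˢ Ioo (G - 2) G →
      muBarO (barTO ⁻¹' E) = muBarO E :=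
  ⟨isFiniteMeasure_muBarO, fun _ hE _ =>
    measurePreserving_barTO.measure_preimage hE.nullMeasurableSet⟩
end

section
/- The map ρ_e sends pairs of irrational numbers in S_e to pairs of irrational numbers in S_e, it is a bijection of the set of such pairs onto itself, and for every irrational pair (x,y) ∈ S_e one has J_e(ρ_e(x,y)) = T̃_e(J_e(x,y)); equivalently, J_e ∘ ρ_e ∘ J_e⁻¹ = T̃_e. -/
open Set

/-- `a_e(x)`: the unique even integer among `⌊1/x⌋`, `⌊1/x⌋ + 1`. -/
noncomputable def aE (x : ℝ) : ℤ := if Even ⌊1 / x⌋ then ⌊1 / x⌋ else ⌊1 / x⌋ + 1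

/-- `ε_e(x) = sign(1/x − a_e(x))`. -/
noncomputable def epsE (x : ℝ) : ℝ := if 0 < 1 / x - aE x then 1 else -1

/-- The even-continued-fraction Gauss map `T_e(x) = |1/x − a_e(x)|`. -/
noncomputable def TE (x : ℝ) : ℝ := |1 / x - aE x|

/-- The extension `T̃_e(x, y, ε) = (T_e x, ε_e(x)/(a_e(x)+y), −ε_e(x)·ε)`. -/
noncomputable def tTE (q : ℝ × ℝ × ℝ) : ℝ × ℝ × ℝ :=
  (TE q.1, epsE q.1 / ((aE q.1 : ℝ) + q.2.1), -epsE q.1 * q.2.2)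

/-- For `|x| > 1`, the unique even integer among `⌊|x|⌋`, `⌊|x|⌋ + 1`. -/
noncomputable def aAbsE (x : ℝ) : ℤ :=
  if Even ⌊|x|⌋ then ⌊|x|⌋ else ⌊|x|⌋ + 1

/-- The first-return map `ρ_e(x,y) = (g x, g y)`, `g t = 1/(sign(x)·a(x) − t)`. -/
noncomputable def rhoE (p : ℝ × ℝ) : ℝ × ℝ :=
  (1 / (sgn p.1 * (aAbsE p.1 : ℝ) - p.1), 1 / (sgn p.1 * (aAbsE p.1 : ℝ) - p.2))

/-- Pairs of irrational numbers in `S_e = ((−∞,−1) ∪ (1,∞)) × (−1,1)`. -/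
def SEirr : Set (ℝ × ℝ) :=
  {p | Irrational p.1 ∧ Irrational p.2 ∧
    (1 < p.1 ∨ p.1 < -1) ∧ -1 < p.2 ∧ p.2 < 1}

/-- The map `J_e(x,y) = (1/x, −y, 1)` if `x > 1` and `(−1/x, y, −1)` if `x < −1`. -/
noncomputable def JE (p : ℝ × ℝ) : ℝ × ℝ × ℝ :=
  if 1 < p.1 then (1 / p.1, -p.2, 1) else (-(1 / p.1), p.2, -1)

/-- Irrational triples in `Ω̃_e = (0,1) × (−1,1) × {±1}`. -/
def OmegaEtildeIrr : Set (ℝ × ℝ × ℝ) :=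
  {q | Irrational q.1 ∧ 0 < q.1 ∧ q.1 < 1 ∧
    Irrational q.2.1 ∧ -1 < q.2.1 ∧ q.2.1 < 1 ∧ (q.2.2 = 1 ∨ q.2.2 = -1)}

/-! For irrational `x`, `b = sgn x · a(x)` is the unique even integer with `|b - x| < 1`, so
`ρ_e(x, y) = (1 / (b - x), 1 / (b - y))`. Since `|b| ≥ 2`, the first coordinate leaves `[-1, 1]`
and the second enters `(-1, 1)`; and `b` is recovered from the image as the even integer nearest
`1 / y'`, which inverts `ρ_e`. Writing `x = s |x|` and `b = s a` with `s = ±1`, the identity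
`b - x = -s (|x| - a)` turns `J_e ∘ ρ_e` into `T̃_e ∘ J_e` coordinatewise. -/

lemma Irrational.abs {x : ℝ} (hx : Irrational x) : Irrational |x| := by
  rcases abs_choice x with h | h <;> rw [h]
  exacts [hx, hx.neg]

lemma Irrational.one_div {x : ℝ} (hx : Irrational x) : Irrational (1 / x) := by
  rw [_root_.one_div]; exact hx.inv

lemma sgn_mul_abs (t : ℝ) : sgn t * |t| = t := by
  unfold sgn; split_ifs with h
  · rw [one_mul, abs_of_pos h]
  · rw [abs_of_nonpos (not_lt.1 h)]; ring

lemma abs_sgn (t : ℝ) : |sgn t| = 1 := by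
  unfold sgn; split_ifs <;> simp

lemma sgn_one_div (t : ℝ) : sgn (1 / t) = sgn t := by
  simp only [sgn, one_div_pos]

lemma sgn_neg {t : ℝ} (ht : t ≠ 0) : sgn (-t) = -sgn t := by
  rcases ht.lt_or_gt with h | h <;> simp [sgn, h, h.not_gt]

lemma eq_of_even_of_abs_sub_lt_one {b c : ℤ} (hb : Even b) (hc : Even c) {t : ℝ}
    (hbt : |(b : ℝ) - t| < 1) (hct : |(c : ℝ) - t| < 1) : b = c := by
  rw [abs_sub_lt_iff] at hbt hct
  have hlt : ((b - c : ℤ) : ℝ) < 2 := by push_cast; linarith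
  have hgt : (-2 : ℝ) < ((b - c : ℤ) : ℝ) := by push_cast; linarith
  have hlt' : b - c < 2 := by exact_mod_cast hlt
  have hgt' : -2 < b - c := by exact_mod_cast hgt
  obtain ⟨k, rfl⟩ := hb
  obtain ⟨l, rfl⟩ := hc
  omega

lemma two_le_abs_of_even {b : ℤ} (hb : Even b) (h0 : b ≠ 0) : (2 : ℝ) ≤ |(b : ℝ)| := by
  obtain ⟨k, rfl⟩ := hb
  have : 2 ≤ |k + k| := by rw [le_abs]; omega
  exact_mod_cast this

lemma even_aAbsE (x : ℝ) : Even (aAbsE x) := by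
  unfold aAbsE; split_ifs with h
  exacts [h, Int.even_add_one.2 h]

lemma abs_aAbsE_sub_abs_lt_one {x : ℝ} (hx : Irrational x) : |(aAbsE x : ℝ) - (|x|)| < 1 := by
  have hlo : (⌊|x|⌋ : ℝ) < |x| := (Int.floor_le _).lt_of_ne (hx.abs.ne_int _).symm
  have hhi : |x| < ⌊|x|⌋ + 1 := Int.lt_floor_add_one _
  rw [abs_sub_lt_iff]
  unfold aAbsE; split_ifs <;> push_cast <;> constructor <;> linarith

/-- For irrational `t`, the unique even integer at distance `< 1` from `t`. -/
noncomputable def evenRound (t : ℝ) : ℤ := if 0 < t then aAbsE t else -aAbsE t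

lemma sgn_mul_aAbsE (t : ℝ) : sgn t * aAbsE t = evenRound t := by
  unfold sgn evenRound; split_ifs <;> push_cast <;> ring

lemma even_evenRound (t : ℝ) : Even (evenRound t) := by
  unfold evenRound; split_ifs
  exacts [even_aAbsE t, (even_aAbsE t).neg]

lemma abs_evenRound_sub_lt_one {t : ℝ} (ht : Irrational t) : |(evenRound t : ℝ) - t| < 1 := by
  have : (evenRound t : ℝ) - t = sgn t * ((aAbsE t : ℝ) - |t|) := by
    rw [← sgn_mul_aAbsE, mul_sub, sgn_mul_abs]
  rw [this, abs_mul, abs_sgn, one_mul]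
  exact abs_aAbsE_sub_abs_lt_one ht

lemma evenRound_eq {t : ℝ} (ht : Irrational t) {c : ℤ} (hc : Even c) (hct : |(c : ℝ) - t| < 1) :
    evenRound t = c :=
  eq_of_even_of_abs_sub_lt_one (even_evenRound t) hc (abs_evenRound_sub_lt_one ht) hct

lemma one_lt_abs_sub_of_even {b : ℤ} (hb : Even b) {x y : ℝ} (hbx : |(b : ℝ) - x| < 1)
    (hx : 1 < |x|) (hy : |y| < 1) : 1 < |(b : ℝ) - y| := by
  have hb0 : b ≠ 0 := by
    rintro rfl
    rw [Int.cast_zero, zero_sub, abs_neg] at hbx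
    linarith
  have := two_le_abs_of_even hb hb0
  have := abs_sub_abs_le_abs_sub (b : ℝ) y
  linarith

lemma one_lt_abs_one_div {t : ℝ} (h0 : t ≠ 0) (h1 : |t| < 1) : 1 < |1 / t| := by
  rw [abs_one_div, lt_one_div one_pos (abs_pos.2 h0), one_div_one]
  exact h1

lemma abs_one_div_lt_one {t : ℝ} (h : 1 < |t|) : |1 / t| < 1 := by
  rw [abs_one_div, div_lt_one (one_pos.trans h)]
  exact h

lemma mem_SEirr {x y : ℝ} :
    (x, y) ∈ SEirr ↔ Irrational x ∧ Irrational y ∧ 1 < |x| ∧ |y| < 1 := by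
  simp only [SEirr, mem_ofPred_eq, lt_abs, abs_lt, lt_neg]

lemma rhoE_mk (x y : ℝ) :
    rhoE (x, y) = (1 / ((evenRound x : ℝ) - x), 1 / ((evenRound x : ℝ) - y)) := by
  simp only [rhoE, sgn_mul_aAbsE]

lemma mapsTo_rhoE : MapsTo rhoE SEirr SEirr := by
  rintro ⟨x, y⟩ hp
  obtain ⟨hx, hy, hx1, hy1⟩ := mem_SEirr.1 hp
  have hbx := abs_evenRound_sub_lt_one hx
  rw [rhoE_mk, mem_SEirr]
  exact ⟨(hx.intCast_sub _).one_div, (hy.intCast_sub _).one_div,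
    one_lt_abs_one_div (hx.intCast_sub _).ne_zero hbx,
    abs_one_div_lt_one (one_lt_abs_sub_of_even (even_evenRound x) hbx hx1 hy1)⟩

/-- If `y' = 1 / (b - y)` with `|y| < 1`, then `b` is the even integer nearest `1 / y'`. -/
noncomputable def rhoEInv (q : ℝ × ℝ) : ℝ × ℝ :=
  ((evenRound (1 / q.2) : ℝ) - 1 / q.1, (evenRound (1 / q.2) : ℝ) - 1 / q.2)

lemma mapsTo_rhoEInv : MapsTo rhoEInv SEirr SEirr := by
  rintro ⟨x, y⟩ hq
  obtain ⟨hx, hy, hx1, hy1⟩ := mem_SEirr.1 hq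
  have hcy := abs_evenRound_sub_lt_one hy.one_div
  rw [rhoEInv, mem_SEirr]
  exact ⟨hx.one_div.intCast_sub _, hy.one_div.intCast_sub _,
    one_lt_abs_sub_of_even (even_evenRound _) hcy (one_lt_abs_one_div hy.ne_zero hy1)
      (abs_one_div_lt_one hx1), hcy⟩

lemma leftInvOn_rhoEInv : LeftInvOn rhoEInv rhoE SEirr := by
  rintro ⟨x, y⟩ hp
  obtain ⟨-, hy, -, hy1⟩ := mem_SEirr.1 hp
  have hb : evenRound ((evenRound x : ℝ) - y) = evenRound x :=
    evenRound_eq (hy.intCast_sub _) (even_evenRound x) (by rwa [sub_sub_cancel])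
  simp only [rhoE_mk, rhoEInv, one_div_one_div, hb, sub_sub_cancel]

lemma rightInvOn_rhoEInv : RightInvOn rhoEInv rhoE SEirr := by
  rintro ⟨x, y⟩ hq
  obtain ⟨hx, -, hx1, -⟩ := mem_SEirr.1 hq
  have hc : evenRound ((evenRound (1 / y) : ℝ) - 1 / x) = evenRound (1 / y) :=
    evenRound_eq (hx.one_div.intCast_sub _) (even_evenRound _)
      (by rw [sub_sub_cancel]; exact abs_one_div_lt_one hx1)
  simp only [rhoEInv, rhoE_mk, hc, sub_sub_cancel, one_div_one_div]

lemma bijOn_rhoE : BijOn rhoE SEirr SEirr :=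
  InvOn.bijOn ⟨leftInvOn_rhoEInv, rightInvOn_rhoEInv⟩ mapsTo_rhoE mapsTo_rhoEInv

lemma Irrational.mul_of_abs_eq_one {e v : ℝ} (he : |e| = 1) (hv : Irrational v) :
    Irrational (e * v) := by
  rcases (abs_eq zero_le_one).1 he with rfl | rfl
  exacts [by rwa [one_mul], by rw [neg_one_mul]; exact hv.neg]

lemma mem_OmegaEtildeIrr {u v e : ℝ} : (u, v, e) ∈ OmegaEtildeIrr ↔
    Irrational u ∧ 0 < u ∧ u < 1 ∧ Irrational v ∧ |v| < 1 ∧ |e| = 1 := by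
  simp only [OmegaEtildeIrr, mem_ofPred_eq, abs_lt, abs_eq zero_le_one, and_assoc]

lemma JE_mk {x : ℝ} (hx : 1 < |x|) (y : ℝ) : JE (x, y) = (1 / |x|, -(sgn x * y), sgn x) := by
  rcases lt_abs.1 hx with h | h
  · have h0 : 0 < x := one_pos.trans h
    simp [JE, sgn, h, h0, abs_of_pos h0]
  · have h0 : x < 0 := by linarith
    simp [JE, sgn, h0.not_gt, (by linarith : ¬ 1 < x), abs_of_neg h0]

noncomputable def jEInv (q : ℝ × ℝ × ℝ) : ℝ × ℝ := (q.2.2 / q.1, -(q.2.2 * q.2.1))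

lemma mapsTo_JE : MapsTo JE SEirr OmegaEtildeIrr := by
  rintro ⟨x, y⟩ hp
  obtain ⟨hx, hy, hx1, hy1⟩ := mem_SEirr.1 hp
  rw [JE_mk hx1, mem_OmegaEtildeIrr]
  exact ⟨hx.abs.one_div, one_div_pos.2 (one_pos.trans hx1), (div_lt_one (one_pos.trans hx1)).2 hx1,
    (hy.mul_of_abs_eq_one (abs_sgn x)).neg, by rwa [abs_neg, abs_mul, abs_sgn, one_mul],
    abs_sgn x⟩

lemma mapsTo_jEInv : MapsTo jEInv OmegaEtildeIrr SEirr := by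
  rintro ⟨u, v, e⟩ hq
  obtain ⟨hu, hu0, hu1, hv, hv1, he⟩ := mem_OmegaEtildeIrr.1 hq
  rw [jEInv, mem_SEirr, ← mul_one_div, abs_neg, abs_mul, abs_mul, he, one_mul, one_mul,
    abs_of_pos (one_div_pos.2 hu0), lt_one_div one_pos hu0, one_div_one]
  exact ⟨hu.one_div.mul_of_abs_eq_one he, (hv.mul_of_abs_eq_one he).neg, hu1, hv1⟩

lemma leftInvOn_jEInv : LeftInvOn jEInv JE SEirr := by
  rintro ⟨x, y⟩ hp
  rw [JE_mk (mem_SEirr.1 hp).2.2.1]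
  simp only [jEInv, div_div_eq_mul_div, div_one, sgn_mul_abs, mul_neg, neg_neg, ← mul_assoc,
    ← abs_mul_abs_self (sgn x), abs_sgn, one_mul]

lemma rightInvOn_jEInv : RightInvOn jEInv JE OmegaEtildeIrr := by
  rintro ⟨u, v, e⟩ hq
  obtain ⟨-, hu0, hu1, -, -, he⟩ := mem_OmegaEtildeIrr.1 hq
  have habs : |e / u| = 1 / u := by rw [abs_div, he, abs_of_pos hu0]
  have hsgn : sgn (e / u) = e := by
    have := one_div_pos.2 hu0
    rcases (abs_eq zero_le_one).1 he with rfl | rfl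
    · exact if_pos this
    · exact if_neg (by rw [neg_div]; linarith)
  have h1 : 1 < |e / u| := by rwa [habs, lt_one_div one_pos hu0, one_div_one]
  rw [jEInv, JE_mk h1, habs, hsgn, one_div_one_div, mul_neg, neg_neg, ← mul_assoc,
    ← abs_mul_abs_self e, he, one_mul, one_mul]

lemma bijOn_JE : BijOn JE SEirr OmegaEtildeIrr :=
  InvOn.bijOn ⟨leftInvOn_jEInv, rightInvOn_jEInv⟩ mapsTo_JE mapsTo_jEInv

lemma JE_rhoE {x y : ℝ} (hp : (x, y) ∈ SEirr) :
    JE (rhoE (x, y)) = (|(evenRound x : ℝ) - x|,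
      -(sgn ((evenRound x : ℝ) - x) / ((evenRound x : ℝ) - y)), sgn ((evenRound x : ℝ) - x)) := by
  have h := mapsTo_rhoE hp
  rw [rhoE_mk, mem_SEirr] at h
  rw [rhoE_mk, JE_mk h.2.2.1, abs_one_div, one_div_one_div, sgn_one_div, mul_one_div]

lemma aE_one_div_abs (x : ℝ) : aE (1 / |x|) = aAbsE x := by
  simp only [aE, aAbsE, one_div_one_div]

lemma tTE_JE {x : ℝ} (hx : 1 < |x|) (y : ℝ) :
    tTE (JE (x, y)) = (|(|x|) - aAbsE x|, sgn (|x| - aAbsE x) / (aAbsE x + -(sgn x * y)),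
      -sgn (|x| - aAbsE x) * sgn x) := by
  rw [JE_mk hx]
  simp only [tTE, TE, epsE, aE_one_div_abs, one_div_one_div]
  rfl

lemma JE_rhoE_eq_tTE_JE {p : ℝ × ℝ} (hp : p ∈ SEirr) : JE (rhoE p) = tTE (JE p) := by
  obtain ⟨x, y⟩ := p
  obtain ⟨hx, -, hx1, -⟩ := mem_SEirr.1 hp
  rw [JE_rhoE hp, tTE_JE hx1, ← sgn_mul_aAbsE]
  rcases hx.ne_zero.lt_or_gt with hneg | hpos
  · have hs : sgn x = -1 := if_neg hneg.not_gt
    rw [abs_of_neg hneg, hs, show -1 * (aAbsE x : ℝ) - x = -x - aAbsE x by ring,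
      show -1 * (aAbsE x : ℝ) - y = -(aAbsE x + -(-1 * y)) by ring, div_neg, neg_neg,
      neg_mul_neg, mul_one]
  · have hs : sgn x = 1 := if_pos hpos
    have ht : x - aAbsE x ≠ 0 := sub_ne_zero.2 (hx.ne_int _)
    rw [abs_of_pos hpos, hs, show 1 * (aAbsE x : ℝ) - x = -(x - aAbsE x) by ring,
      show 1 * (aAbsE x : ℝ) - y = aAbsE x + -(1 * y) by ring, abs_neg, sgn_neg ht, neg_div,
      neg_neg, mul_one]

/-- `ρ_e` maps irrational pairs of `S_e` to irrational pairs of `S_e`, is a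
bijection of this set onto itself, and is conjugated to `T̃_e` via the
bijection `J_e` from irrational pairs in `S_e` onto irrational triples in
`Ω̃_e`:  `J_e ∘ ρ_e = T̃_e ∘ J_e`, i.e. `J_e ∘ ρ_e ∘ J_e⁻¹ = T̃_e`. -/
theorem rhoE_bijOn_and_conj_tTE :
    Set.MapsTo rhoE SEirr SEirr ∧
    Set.BijOn rhoE SEirr SEirr ∧
    Set.BijOn JE SEirr OmegaEtildeIrr ∧
    ∀ p ∈ SEirr, JE (rhoE p) = tTE (JE p) :=
  ⟨mapsTo_rhoE, bijOn_rhoE, bijOn_JE, fun _ => JE_rhoE_eq_tTE_JE⟩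
end

section
/- The Borel measure μ̄_e on Ω_e = (0,1)×(−1,1) with density (x,y) ↦ (1+xy)⁻² with respect to two-dimensional Lebesgue measure is T̄_e-invariant: μ̄_e(T̄_e⁻¹(E)) = μ̄_e(E) for every Borel set E ⊆ Ω_e. -/
open Set MeasureTheory

/-- The natural extension `T̄_e(x,y) = (T_e x, ε_e(x)/(a_e(x)+y))`. -/
noncomputable def barTE (p : ℝ × ℝ) : ℝ × ℝ :=
  (TE p.1, epsE p.1 / ((aE p.1 : ℝ) + p.2))

/-- The measure `μ̄_e` on `Ω_e = (0,1)×(−1,1)` with density `(1+xy)⁻²` with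
respect to the two-dimensional Lebesgue measure. -/
noncomputable def muBarE : Measure (ℝ × ℝ) :=
  ((volume : Measure (ℝ × ℝ)).restrict (Ioo (0 : ℝ) 1 ×ˢ Ioo (-1 : ℝ) 1)).withDensity
    (fun p => ENNReal.ofReal (((1 + p.1 * p.2) ^ 2)⁻¹))

/-!
Off the null set where `1/x` is an integer, `T̄_e` is injective, and its image contains every
point of `Ω_e` whose `1/y` is not an integer: the digit `a` and the sign `ε` of a preimage are read
off the second coordinate `v = ε/(a+y)`, since `a` is the even integer within distance `1` of
`1/|v| = a + y`. On each branch `T̄_e(x,y) = (ε(1/x − a), ε/(a+y))` has Jacobian `1/(x(a+y))²`,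
while the density `(1+uv)⁻²` at the image point `(u,v)` equals `(x(a+y))²/(1+xy)²`; so the
change-of-variables formula for this single injective map gives the invariance.
-/

open scoped ENNReal Topology
open Filter

theorem withDensity_image_eq_of_abs_det_mul {E : Type*} [NormedAddCommGroup E]
    [NormedSpace ℝ E] [FiniteDimensional ℝ E] [MeasurableSpace E] [BorelSpace E] (μ : Measure E)
    [μ.IsAddHaarMeasure] {f : E → E} {f' : E → E →L[ℝ] E} {g : E → ℝ≥0∞} {s : Set E}
    (hs : MeasurableSet s) (hf' : ∀ x ∈ s, HasFDerivWithinAt f (f' x) s x) (hf : InjOn f s)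
    (hg : ∀ x ∈ s, ENNReal.ofReal |(f' x).det| * g (f x) = g x) :
    μ.withDensity g (f '' s) = μ.withDensity g s := by
  rw [withDensity_apply' _ (f '' s), withDensity_apply' _ s,
    lintegral_image_eq_lintegral_abs_det_fderiv_mul μ hs hf' hf]
  exact setLIntegral_congr_fun hs hg

namespace EvenCF

noncomputable def nonIntegralRecip : Set ℝ := {x | 1 / x ∉ range ((↑) : ℤ → ℝ)}

lemma countable_nonIntegralRecip_compl : nonIntegralRecipᶜ.Countable := by
  refine (countable_range fun n : ℤ => 1 / (n : ℝ)).mono fun x hx => ?_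
  obtain ⟨n, hn⟩ := not_not.1 hx
  exact ⟨n, by simp only [hn, one_div_one_div]⟩

lemma ae_fst_mem_nonIntegralRecip : ∀ᵐ p : ℝ × ℝ, p.1 ∈ nonIntegralRecip :=
  Measure.quasiMeasurePreserving_fst.ae
    ((countable_nonIntegralRecip_compl.ae_notMem _).mono fun _ => not_not.1)

lemma ae_snd_mem_nonIntegralRecip : ∀ᵐ p : ℝ × ℝ, p.2 ∈ nonIntegralRecip :=
  Measure.quasiMeasurePreserving_snd.ae
    ((countable_nonIntegralRecip_compl.ae_notMem _).mono fun _ => not_not.1)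

lemma mem_nonIntegralRecip_of_mem_Ioo {x : ℝ} {k : ℤ} (h : 1 / x ∈ Ioo (k : ℝ) (k + 1)) :
    x ∈ nonIntegralRecip := by
  rintro ⟨n, hn⟩
  rw [← hn] at h
  obtain ⟨h1, h2⟩ := h
  norm_cast at h1 h2
  omega

lemma ne_zero_of_mem_nonIntegralRecip {x : ℝ} (hx : x ∈ nonIntegralRecip) : x ≠ 0 := by
  rintro rfl
  exact hx ⟨0, by simp⟩

lemma abs_mem_nonIntegralRecip {x : ℝ} (hx : x ∈ nonIntegralRecip) :
    |x| ∈ nonIntegralRecip := by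
  rintro ⟨n, hn⟩
  rcases abs_choice x with h | h <;> rw [h] at hn
  · exact hx ⟨n, hn⟩
  · exact hx ⟨-n, by rw [Int.cast_neg, hn, one_div_neg_eq_neg_one_div, neg_neg]⟩

lemma floor_lt_of_mem_nonIntegralRecip {x : ℝ} (hx : x ∈ nonIntegralRecip) :
    (⌊1 / x⌋ : ℝ) < 1 / x :=
  (Int.floor_le _).lt_of_ne fun h => hx ⟨_, h⟩

lemma even_aE (x : ℝ) : Even (aE x) := by
  unfold aE
  split_ifs with h
  · exact h
  · exact Int.even_add_one.2 h

lemma aE_eq_of_abs_sub_lt {x : ℝ} {a : ℤ} (ha : Even a) (h : |1 / x - a| < 1) :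
    aE x = a := by
  obtain ⟨h1, h2⟩ := abs_sub_lt_iff.1 h
  rcases le_or_gt (a : ℝ) (1 / x) with hle | hlt
  · have hfl : ⌊1 / x⌋ = a := Int.floor_eq_iff.2 ⟨hle, by linarith⟩
    rw [aE, hfl, if_pos ha]
  · have hfl : ⌊1 / x⌋ = a - 1 :=
      Int.floor_eq_iff.2 ⟨by push_cast; linarith, by push_cast; linarith⟩
    have hodd : ¬Even (a - 1) := by simpa [Int.even_sub_one] using ha
    rw [aE, hfl, if_neg hodd, sub_add_cancel]

lemma abs_sub_aE_lt_one {x : ℝ} (hx : x ∈ nonIntegralRecip) : |1 / x - aE x| < 1 := by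
  have h1 := floor_lt_of_mem_nonIntegralRecip hx
  have h2 := Int.lt_floor_add_one (1 / x)
  rw [abs_sub_lt_iff]
  unfold aE
  split_ifs <;> push_cast <;> constructor <;> linarith

lemma two_le_aE {x : ℝ} (hx : x ∈ Ioo (0 : ℝ) 1) : 2 ≤ aE x := by
  have h1 : 1 ≤ ⌊1 / x⌋ := Int.le_floor.2 (by
    rw [Int.cast_one, le_div_iff₀ hx.1]; linarith [hx.2])
  have h2 : ⌊1 / x⌋ ≤ aE x := by unfold aE; split_ifs <;> omega
  obtain ⟨k, hk⟩ := even_aE x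
  omega

lemma epsE_eq_ite {x : ℝ} (hx : x ∈ nonIntegralRecip) :
    epsE x = if Even ⌊1 / x⌋ then 1 else -1 := by
  have h1 := floor_lt_of_mem_nonIntegralRecip hx
  have h2 := Int.lt_floor_add_one (1 / x)
  unfold epsE aE
  split_ifs <;> push_cast at * <;> first | rfl | linarith

lemma epsE_eq {x ε : ℝ} (hε : ε = 1 ∨ ε = -1) (h : 0 < ε * (1 / x - aE x)) : epsE x = ε := by
  rcases hε with rfl | rfl <;> unfold epsE <;> split_ifs <;> linarith

lemma epsE_mul_self (x : ℝ) : epsE x * epsE x = 1 := by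
  unfold epsE; split_ifs <;> norm_num

lemma abs_epsE (x : ℝ) : |epsE x| = 1 := by
  unfold epsE; split_ifs <;> norm_num

lemma TE_eq_epsE_mul (x : ℝ) : TE x = epsE x * (1 / x - aE x) := by
  unfold TE epsE
  split_ifs with h
  · rw [abs_of_pos h, one_mul]
  · rw [abs_of_nonpos (not_lt.1 h), neg_one_mul]

lemma aE_epsE_of_one_div_eq {x ε u : ℝ} {a : ℤ} (ha : Even a) (hε : ε = 1 ∨ ε = -1)
    (hu : u ∈ Ioo (0 : ℝ) 1) (h : 1 / x = a + ε * u) :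
    aE x = a ∧ epsE x = ε ∧ x ∈ nonIntegralRecip := by
  obtain ⟨hu0, hu1⟩ := hu
  have hεε : ε * ε = 1 := by rcases hε with rfl | rfl <;> norm_num
  have haE : aE x = a := by
    refine aE_eq_of_abs_sub_lt ha ?_
    rw [h, add_sub_cancel_left, abs_mul, abs_of_pos hu0]
    rcases hε with rfl | rfl <;> simpa using hu1
  refine ⟨haE, epsE_eq hε ?_, ?_⟩
  · rwa [haE, h, add_sub_cancel_left, ← mul_assoc, hεε, one_mul]
  · rcases hε with rfl | rfl
    · exact mem_nonIntegralRecip_of_mem_Ioo (k := a) (by rw [h]; constructor <;> linarith)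
    · exact mem_nonIntegralRecip_of_mem_Ioo (k := a - 1)
        (by rw [h]; push_cast; constructor <;> linarith)

lemma eventually_aE_epsE_eq {x : ℝ} (hx : x ∈ nonIntegralRecip) :
    ∀ᶠ x' in 𝓝 x, aE x' = aE x ∧ epsE x' = epsE x := by
  have hIoo : Ioo (⌊1 / x⌋ : ℝ) (⌊1 / x⌋ + 1) ∈ 𝓝 (1 / x) :=
    Ioo_mem_nhds (floor_lt_of_mem_nonIntegralRecip hx) (Int.lt_floor_add_one _)
  have hcont : ContinuousAt (fun x' : ℝ => 1 / x') x :=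
    continuousAt_const.div continuousAt_id (ne_zero_of_mem_nonIntegralRecip hx)
  filter_upwards [hcont.preimage_mem_nhds hIoo] with x' hx'
  have hfl : ⌊1 / x'⌋ = ⌊1 / x⌋ := Int.floor_eq_iff.2 ⟨hx'.1.le, hx'.2⟩
  refine ⟨by simp only [aE, hfl], ?_⟩
  rw [epsE_eq_ite hx, epsE_eq_ite (mem_nonIntegralRecip_of_mem_Ioo hx'), hfl]

lemma coe_sign_eq_one_or_neg_one {v : ℝ} (hv : v ≠ 0) :
    (SignType.sign v : ℝ) = 1 ∨ (SignType.sign v : ℝ) = -1 := by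
  rcases hv.lt_or_gt with hv | hv
  · exact .inr (by simp [sign_neg hv])
  · exact .inl (by simp [sign_pos hv])

noncomputable def densE (p : ℝ × ℝ) : ℝ≥0∞ := ENNReal.ofReal (((1 + p.1 * p.2) ^ 2)⁻¹)

noncomputable def branchMap (a ε : ℝ) (p : ℝ × ℝ) : ℝ × ℝ :=
  (ε * (1 / p.1 - a), ε / (a + p.2))

noncomputable def branchMapDeriv (a ε : ℝ) (p : ℝ × ℝ) : ℝ × ℝ →L[ℝ] ℝ × ℝ :=
  ((1 : ℝ →L[ℝ] ℝ).smulRight (-ε / p.1 ^ 2)).prodMap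
    ((1 : ℝ →L[ℝ] ℝ).smulRight (-ε / (a + p.2) ^ 2))

lemma det_smulRight_prodMap_smulRight (c d : ℝ) :
    (((1 : ℝ →L[ℝ] ℝ).smulRight c).prodMap ((1 : ℝ →L[ℝ] ℝ).smulRight d)).det = c * d := by
  rw [ContinuousLinearMap.det, ContinuousLinearMap.coe_prodMap, LinearMap.det_prodMap]
  simp

lemma hasFDerivAt_branchMap (a ε : ℝ) {p : ℝ × ℝ} (hx : p.1 ≠ 0) (hy : a + p.2 ≠ 0) :
    HasFDerivAt (branchMap a ε) (branchMapDeriv a ε p) p := by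
  have h1 : HasDerivAt (fun x : ℝ => ε * (1 / x - a)) (-ε / p.1 ^ 2) p.1 := by
    rw [show -ε / p.1 ^ 2 = ε * -(p.1 ^ 2)⁻¹ by ring]
    simpa only [one_div] using ((hasDerivAt_inv hx).sub_const a).const_mul ε
  have h2 : HasDerivAt (fun y : ℝ => ε / (a + y)) (-ε / (a + p.2) ^ 2) p.2 := by
    rw [show -ε / (a + p.2) ^ 2 = ε * (-1 / (a + p.2) ^ 2) by ring]
    simpa only [div_eq_mul_inv ε, Pi.inv_apply] using
      (((hasDerivAt_id' p.2).const_add a).inv hy).const_mul ε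
  exact h1.hasFDerivAt.prodMap p h2.hasFDerivAt

lemma abs_det_branchMapDeriv_mul_densE {a ε : ℝ} (hε : ε * ε = 1) {p : ℝ × ℝ}
    (hx : p.1 ≠ 0) (hy : a + p.2 ≠ 0) :
    ENNReal.ofReal |(branchMapDeriv a ε p).det| * densE (branchMap a ε p) = densE p := by
  have hdet : (branchMapDeriv a ε p).det = ((p.1 * (a + p.2)) ^ 2)⁻¹ := by
    rw [branchMapDeriv, det_smulRight_prodMap_smulRight]
    field_simp
    linear_combination hε
  have hsum : 1 + ε * (1 / p.1 - a) * (ε / (a + p.2)) =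
      (1 + p.1 * p.2) / (p.1 * (a + p.2)) := by
    field_simp
    linear_combination (1 - p.1 * a) * hε
  rw [hdet, abs_of_nonneg (by positivity), densE, densE, branchMap,
    ← ENNReal.ofReal_mul (by positivity), hsum, div_pow, inv_div, mul_pow, div_eq_mul_inv,
    inv_mul_cancel_left₀ (mul_ne_zero (pow_ne_zero _ hx) (pow_ne_zero _ hy))]

def omegaE : Set (ℝ × ℝ) := Ioo (0 : ℝ) 1 ×ˢ Ioo (-1 : ℝ) 1

lemma measurableSet_omegaE : MeasurableSet omegaE := measurableSet_Ioo.prod measurableSet_Ioo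

noncomputable def nuE : Measure (ℝ × ℝ) := volume.withDensity densE

lemma muBarE_apply (A : Set (ℝ × ℝ)) : muBarE A = nuE (A ∩ omegaE) := by
  change (volume.restrict omegaE).withDensity densE A = _
  rw [nuE, ← restrict_withDensity measurableSet_omegaE,
    Measure.restrict_apply' measurableSet_omegaE]

lemma barTE_eq_branchMap (p : ℝ × ℝ) : barTE p = branchMap (aE p.1) (epsE p.1) p := by
  rw [barTE, branchMap, TE_eq_epsE_mul]

lemma measurable_barTE : Measurable barTE := by
  have hinv : Measurable fun x : ℝ => 1 / x := measurable_const.div measurable_id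
  have haE : Measurable fun x : ℝ => (aE x : ℝ) :=
    (measurable_of_countable fun k : ℤ => ((if Even k then k else k + 1 : ℤ) : ℝ)).comp
      hinv.floor
  have hepsE : Measurable epsE :=
    Measurable.ite (measurableSet_lt measurable_const (hinv.sub haE)) measurable_const
      measurable_const
  have hTE : Measurable TE := (hinv.sub haE).abs
  exact (hTE.comp measurable_fst).prodMk
    ((hepsE.comp measurable_fst).div ((haE.comp measurable_fst).add measurable_snd))

def barTESource : Set (ℝ × ℝ) := omegaE ∩ Prod.fst ⁻¹' nonIntegralRecip

def barTETarget : Set (ℝ × ℝ) := omegaE ∩ Prod.snd ⁻¹' nonIntegralRecip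

lemma measurableSet_barTESource : MeasurableSet barTESource :=
  measurableSet_omegaE.inter
    (countable_nonIntegralRecip_compl.measurableSet.of_compl.preimage measurable_fst)

noncomputable def barTEInv (q : ℝ × ℝ) : ℝ × ℝ :=
  (1 / (aE |q.2| + SignType.sign q.2 * q.1), 1 / |q.2| - aE |q.2|)

lemma aE_add_pos {p : ℝ × ℝ} (hp : p ∈ omegaE) : 0 < (aE p.1 : ℝ) + p.2 := by
  have : (2 : ℝ) ≤ aE p.1 := by exact_mod_cast two_le_aE hp.1
  linarith [hp.2.1]

lemma barTEInv_barTE {p : ℝ × ℝ} (hp : p ∈ barTESource) : barTEInv (barTE p) = p := by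
  have hw := aE_add_pos hp.1
  set w : ℝ := aE p.1 + p.2 with hw_def
  have habs : |epsE p.1 / w| = 1 / w := by rw [abs_div, abs_epsE, abs_of_pos hw]
  have hsign : (SignType.sign (epsE p.1 / w) : ℝ) = epsE p.1 := by
    unfold epsE
    split_ifs
    · rw [sign_pos (show (0 : ℝ) < 1 / w by positivity), SignType.coe_one]
    · simp [sign_neg (div_neg_of_neg_of_pos (show (-1 : ℝ) < 0 by norm_num) hw)]
  have ha : aE (1 / w) = aE p.1 := by
    refine aE_eq_of_abs_sub_lt (even_aE _) ?_
    rw [one_div_one_div, hw_def, add_sub_cancel_left, abs_lt]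
    exact hp.1.2
  rw [barTE_eq_branchMap, barTEInv, branchMap]
  dsimp only
  rw [← hw_def, habs, hsign, ha, ← mul_assoc, epsE_mul_self, one_mul, add_sub_cancel,
    one_div_one_div, one_div_one_div, hw_def, add_sub_cancel_left]

lemma barTEInv_fst_spec {q : ℝ × ℝ} (hq : q ∈ barTETarget) :
    aE (barTEInv q).1 = aE |q.2| ∧ epsE (barTEInv q).1 = SignType.sign q.2 ∧
      (barTEInv q).1 ∈ nonIntegralRecip :=
  aE_epsE_of_one_div_eq (even_aE _)
    (coe_sign_eq_one_or_neg_one (ne_zero_of_mem_nonIntegralRecip hq.2)) hq.1.1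
    (by rw [barTEInv, one_div_one_div])

lemma barTEInv_mem_barTESource {q : ℝ × ℝ} (hq : q ∈ barTETarget) :
    barTEInv q ∈ barTESource := by
  refine ⟨?_, (barTEInv_fst_spec hq).2.2⟩
  obtain ⟨⟨⟨hu0, hu1⟩, hv1, hv2⟩, hv⟩ := hq
  have hv0 := ne_zero_of_mem_nonIntegralRecip hv
  have ha : (2 : ℝ) ≤ aE |q.2| := by
    exact_mod_cast two_le_aE ⟨abs_pos.2 hv0, abs_lt.2 ⟨hv1, hv2⟩⟩
  have hx : 1 < (aE |q.2| : ℝ) + SignType.sign q.2 * q.1 := by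
    rcases coe_sign_eq_one_or_neg_one hv0 with h | h <;> rw [h] <;> linarith
  exact ⟨⟨one_div_pos.2 (by linarith), (div_lt_one (by linarith)).2 hx⟩,
    abs_lt.1 (abs_sub_aE_lt_one (abs_mem_nonIntegralRecip hv))⟩

lemma barTE_barTEInv {q : ℝ × ℝ} (hq : q ∈ barTETarget) : barTE (barTEInv q) = q := by
  obtain ⟨ha, hε, -⟩ := barTEInv_fst_spec hq
  have hεε : (SignType.sign q.2 : ℝ) * SignType.sign q.2 = 1 := by
    rcases coe_sign_eq_one_or_neg_one (ne_zero_of_mem_nonIntegralRecip hq.2) with h | h <;>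
      rw [h] <;> norm_num
  rw [barTE_eq_branchMap, ha, hε, branchMap, barTEInv]
  dsimp only
  rw [one_div_one_div, add_sub_cancel_left, ← mul_assoc, hεε, one_mul, add_sub_cancel,
    div_div_eq_mul_div, div_one, sign_mul_abs]

lemma barTETarget_subset_image : barTETarget ⊆ barTE '' barTESource :=
  fun q hq => ⟨barTEInv q, barTEInv_mem_barTESource hq, barTE_barTEInv hq⟩

lemma hasFDerivAt_barTE {p : ℝ × ℝ} (hp : p ∈ barTESource) :
    HasFDerivAt barTE (branchMapDeriv (aE p.1) (epsE p.1) p) p := by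
  refine (hasFDerivAt_branchMap _ _ hp.1.1.1.ne' (aE_add_pos hp.1).ne').congr_of_eventuallyEq ?_
  filter_upwards [continuousAt_fst.eventually (eventually_aE_epsE_eq hp.2)] with p' hp'
  rw [barTE_eq_branchMap, hp'.1, hp'.2]

lemma nuE_barTE_image {s : Set (ℝ × ℝ)} (hs : MeasurableSet s) (hsU : s ⊆ barTESource) :
    nuE (barTE '' s) = nuE s := by
  refine withDensity_image_eq_of_abs_det_mul volume hs
    (fun p hp => (hasFDerivAt_barTE (hsU hp)).hasFDerivWithinAt)
    (LeftInvOn.injOn fun p hp => barTEInv_barTE (hsU hp)) fun p hp => ?_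
  rw [barTE_eq_branchMap]
  exact abs_det_branchMapDeriv_mul_densE (epsE_mul_self _) (hsU hp).1.1.1.ne'
    (aE_add_pos (hsU hp).1).ne'

end EvenCF

open EvenCF

/-- `μ̄_e` is `T̄_e`-invariant. -/
theorem muBarE_invariant :
    ∀ E : Set (ℝ × ℝ), MeasurableSet E → E ⊆ Ioo (0 : ℝ) 1 ×ˢ Ioo (-1 : ℝ) 1 →
      muBarE (barTE ⁻¹' E) = muBarE E := by
  intro E hE hEΩ
  have hac : nuE ≪ volume := withDensity_absolutelyContinuous _ _
  rw [muBarE_apply, muBarE_apply, inter_eq_left.2 (show E ⊆ omegaE from hEΩ)]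
  calc nuE (barTE ⁻¹' E ∩ omegaE)
      = nuE (barTESource ∩ barTE ⁻¹' E) := by
        refine measure_congr (eventuallyEq_set.2 ?_)
        filter_upwards [hac.ae_le ae_fst_mem_nonIntegralRecip] with p hp
        simp only [barTESource, mem_inter_iff, mem_preimage, hp, and_true]
        exact and_comm
    _ = nuE (barTE '' (barTESource ∩ barTE ⁻¹' E)) :=
        (nuE_barTE_image (measurableSet_barTESource.inter (measurable_barTE hE))
          inter_subset_left).symm
    _ = nuE (barTE '' barTESource ∩ E) := by rw [image_inter_preimage]
    _ = nuE E := by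
        refine measure_congr (eventuallyEq_set.2 ?_)
        filter_upwards [hac.ae_le ae_snd_mem_nonIntegralRecip] with q hq
        exact ⟨And.right, fun hqE => ⟨barTETarget_subset_image ⟨hEΩ hqE, hq⟩, hqE⟩⟩
end

section
/- The Borel measure μ_e on (0,1) with density u ↦ 1/(1+u) + 1/(1−u) with respect to Lebesgue measure is an infinite σ-finite measure invariant under T_e: μ_e(T_e⁻¹(A)) = μ_e(A) for every Borel set A ⊆ (0,1). -/
open Set MeasureTheory

/-- The measure `μ_e` on `(0,1)` with density `u ↦ 1/(1+u) + 1/(1−u)` with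
respect to Lebesgue measure. -/
noncomputable def muE : Measure ℝ :=
  ((volume : Measure ℝ).restrict (Ioo (0 : ℝ) 1)).withDensity
    (fun u => ENNReal.ofReal (1 / (1 + u) + 1 / (1 - u)))

/-!
Where `1/x ∈ [n+1, n+2)`, the map `T_e` has the single inverse branch `y ↦ 1/q_n(y)`, with
`q_n(y) = n+1+y` for odd `n` and `q_n(y) = n+2-y` for even `n`. Writing `h` for the density,
`t⁻² h(1/t) = 1/(t-1) - 1/(t+1)` for `t > 1`, so a change of variables turns the `μ_e`-measure of
the `n`-th piece of `T_e⁻¹ A` into `∫_A (1/(q_n - 1) - 1/(q_n + 1))`. Summed over `n` these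
integrands telescope, over even and odd `n` separately, to `1/(1-y) + 1/(1+y) = h(y)`.
The measure is infinite because `1/(1-u)` is not integrable at `u = 1`.
-/

open Filter Topology Function
open scoped ENNReal

lemma hasSum_sub_succ_of_antitone {f : ℕ → ℝ} (hf : Antitone f)
    (hlim : Tendsto f atTop (𝓝 0)) : HasSum (fun n => f n - f (n + 1)) (f 0) := by
  rw [hasSum_iff_tendsto_nat_of_nonneg fun n => sub_nonneg.2 (hf n.le_succ)]
  simp_rw [Finset.sum_range_sub']
  simpa using (tendsto_const_nhds (x := f 0)).sub hlim

lemma ENNReal.tsum_ofReal_sub_succ_of_antitone {f : ℕ → ℝ} (hf : Antitone f)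
    (hlim : Tendsto f atTop (𝓝 0)) :
    ∑' n, ENNReal.ofReal (f n - f (n + 1)) = ENNReal.ofReal (f 0) := by
  have hsum := hasSum_sub_succ_of_antitone hf hlim
  rw [← ENNReal.ofReal_tsum_of_nonneg (fun n => sub_nonneg.2 (hf n.le_succ)) hsum.summable,
    hsum.tsum_eq]

lemma ENNReal.tsum_ofReal_inv_two_mul_add_sub_inv {b : ℝ} (hb : 0 < b) :
    ∑' k : ℕ, ENNReal.ofReal ((2 * k + b)⁻¹ - (2 * k + b + 2)⁻¹) = ENNReal.ofReal b⁻¹ := by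
  have hanti : Antitone fun k : ℕ => (2 * (k : ℝ) + b)⁻¹ := fun i j hij =>
    inv_anti₀ (by positivity) (by gcongr)
  have hlim : Tendsto (fun k : ℕ => (2 * (k : ℝ) + b)⁻¹) atTop (𝓝 0) :=
    tendsto_inv_atTop_zero.comp <| tendsto_atTop_add_const_right _ _ <|
      tendsto_natCast_atTop_atTop.const_mul_atTop two_pos
  convert ENNReal.tsum_ofReal_sub_succ_of_antitone hanti hlim using 3 with k
  · push_cast
    ring_nf
  · simp

lemma lintegral_image_inv_eq_lintegral_abs_deriv_div_sq_mul {A : Set ℝ} {q q' : ℝ → ℝ}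
    (hA : MeasurableSet A) (hq : ∀ y ∈ A, HasDerivWithinAt q (q' y) A y)
    (hq0 : ∀ y ∈ A, q y ≠ 0) (hinj : InjOn q A) (g : ℝ → ℝ≥0∞) :
    ∫⁻ x in (fun y => (q y)⁻¹) '' A, g x
      = ∫⁻ y in A, ENNReal.ofReal (|q' y| / q y ^ 2) * g (q y)⁻¹ := by
  rw [lintegral_image_eq_lintegral_abs_deriv_mul hA (fun y hy => (hq y hy).fun_inv (hq0 y hy))
    (inv_injective.comp_injOn hinj)]
  refine setLIntegral_congr_fun hA fun y _ => ?_
  rw [neg_div, abs_neg, abs_div, abs_of_nonneg (sq_nonneg (q y))]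

noncomputable def densityE (u : ℝ) : ℝ := 1 / (1 + u) + 1 / (1 - u)

lemma inv_sq_mul_densityE_inv {t : ℝ} (ht : 1 < t) :
    (t ^ 2)⁻¹ * densityE t⁻¹ = (t - 1)⁻¹ - (t + 1)⁻¹ := by
  have : t - 1 ≠ 0 := by linarith
  have : t + 1 ≠ 0 := by linarith
  have : t ≠ 0 := by linarith
  unfold densityE
  field_simp
  ring

lemma muE_apply {S : Set ℝ} (hS : MeasurableSet S) :
    muE S = ∫⁻ u in S ∩ Ioo 0 1, ENNReal.ofReal (densityE u) := by
  rw [muE, withDensity_apply _ hS, Measure.restrict_restrict hS]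
  rfl

lemma muE_compl_Ioo : muE (Ioo 0 1)ᶜ = 0 := by
  rw [muE_apply measurableSet_Ioo.compl, compl_inter_self, Measure.restrict_empty,
    lintegral_zero_measure]

lemma lintegral_Ioo_inv_one_sub_eq_top :
    ∫⁻ u in Ioo (0 : ℝ) 1, ENNReal.ofReal (1 - u)⁻¹ = ∞ := by
  by_contra h
  have hnonneg : 0 ≤ᵐ[volume.restrict (Ioo (0 : ℝ) 1)] fun u => (1 - u)⁻¹ :=
    ae_restrict_of_forall_mem measurableSet_Ioo fun u hu => inv_nonneg.2 (by linarith [hu.2])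
  have hint : IntegrableOn (fun u : ℝ => (1 - u)⁻¹) (Ioo 0 1) :=
    ⟨by fun_prop, (hasFiniteIntegral_iff_ofReal hnonneg).2 (lt_top_iff_ne_top.2 h)⟩
  have : IntervalIntegrable (fun u : ℝ => (u - 1)⁻¹) volume 0 1 := by
    rw [intervalIntegrable_iff_integrableOn_Ioo_of_le zero_le_one]
    exact hint.neg.congr_fun (fun u _ => by rw [Pi.neg_apply, ← inv_neg, neg_sub])
      measurableSet_Ioo
  simp at this

lemma muE_univ : muE univ = ∞ := by
  rw [muE_apply MeasurableSet.univ, univ_inter, eq_top_iff, ← lintegral_Ioo_inv_one_sub_eq_top]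
  refine setLIntegral_mono (by unfold densityE; fun_prop) fun u hu => ?_
  have : 0 ≤ 1 / (1 + u) := one_div_nonneg.2 (by linarith [hu.1])
  exact ENNReal.ofReal_le_ofReal (by rw [densityE, one_div (1 - u)]; linarith)

lemma measurable_aE : Measurable aE :=
  (measurable_from_top (f := fun m : ℤ => if Even m then m else m + 1)).comp
    (Int.measurable_floor.comp (by fun_prop))

lemma measurable_TE : Measurable TE := by
  have : Measurable fun x => (aE x : ℝ) := measurable_from_top.comp measurable_aE
  unfold TE
  fun_prop

/-- If `x ∈ branchDomain n` and `T_e x = y`, then `1/x = completeQuotient n y`. -/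
noncomputable def completeQuotient (n : ℕ) (y : ℝ) : ℝ :=
  if Even n then n + 2 - y else n + 1 + y

/- The left endpoint `1/x = n + 1` is included so that the domains cover `(0, 1)`; there
`T_e x ∈ {0, 1}`. -/
def branchDomain (n : ℕ) : Set ℝ := (·⁻¹) ⁻¹' Ico ((n : ℝ) + 1) (n + 2)

lemma measurableSet_branchDomain (n : ℕ) : MeasurableSet (branchDomain n) :=
  measurable_inv measurableSet_Ico

lemma pairwise_disjoint_branchDomain : Pairwise (Disjoint on branchDomain) := by
  refine (pairwise_disjoint_on _).2 fun m n hmn => Disjoint.preimage _ ?_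
  have : (m : ℝ) + 1 ≤ n := by exact_mod_cast hmn
  rw [Ico_disjoint_Ico]
  exact (min_le_left _ _).trans (by linarith [le_max_right ((m : ℝ) + 1) (n + 1)])

lemma Ioo_subset_iUnion_branchDomain : Ioo (0 : ℝ) 1 ⊆ ⋃ n, branchDomain n := by
  intro x ⟨hx0, hx1⟩
  have h1 : 1 ≤ x⁻¹ := one_le_inv₀ hx0 |>.2 hx1.le
  obtain ⟨n, hn⟩ : ∃ n : ℕ, ⌊x⁻¹⌋₊ = n + 1 :=
    ⟨⌊x⁻¹⌋₊ - 1, by have := (Nat.one_le_floor_iff _).2 h1; omega⟩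
  refine mem_iUnion.2 ⟨n, ?_, ?_⟩
  · simpa [hn] using Nat.floor_le (zero_le_one.trans h1)
  · have := Nat.lt_floor_add_one x⁻¹
    rw [hn] at this
    push_cast at this
    linarith

lemma muE_eq_tsum_inter_branchDomain {S : Set ℝ} (hS : MeasurableSet S) :
    muE S = ∑' n, muE (S ∩ branchDomain n) := by
  have hnull : muE (⋃ n, branchDomain n)ᶜ = 0 :=
    measure_mono_null (compl_subset_compl.2 Ioo_subset_iUnion_branchDomain) muE_compl_Ioo
  rw [← measure_iUnion (pairwise_disjoint_branchDomain.mono fun m n h =>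
      h.mono inter_subset_right inter_subset_right)
    fun n => hS.inter (measurableSet_branchDomain n), ← inter_iUnion, measure_inter_conull hnull]

lemma aE_eq_of_inv_mem_Ico {n : ℕ} {x : ℝ} (hx : x⁻¹ ∈ Ico ((n : ℝ) + 1) (n + 2)) :
    aE x = if Even n then (n : ℤ) + 2 else (n : ℤ) + 1 := by
  have hfloor : ⌊1 / x⌋ = n + 1 := by
    rw [one_div, Int.floor_eq_iff]
    push_cast
    exact ⟨hx.1, by linarith [hx.2]⟩
  have hparity : Even ((n : ℤ) + 1) ↔ ¬Even n := by simp [parity_simps]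
  by_cases hn : Even n
  · simp only [aE, hfloor, hparity, hn, if_true, not_true_eq_false, if_false]
    ring
  · simp only [aE, hfloor, hparity, hn, if_false, not_false_eq_true, if_true]

lemma completeQuotient_TE {n : ℕ} {x : ℝ} (hx : x⁻¹ ∈ Ico ((n : ℝ) + 1) (n + 2)) :
    completeQuotient n (TE x) = x⁻¹ := by
  obtain ⟨h1, h2⟩ := hx
  rw [TE, aE_eq_of_inv_mem_Ico ⟨h1, h2⟩, completeQuotient, one_div]
  split_ifs
  · push_cast
    rw [abs_of_nonpos (by linarith)]
    ring
  · push_cast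
    rw [abs_of_nonneg (by linarith)]
    ring

lemma completeQuotient_mem_Ioo {n : ℕ} {y : ℝ} (hy : y ∈ Ioo (0 : ℝ) 1) :
    completeQuotient n y ∈ Ioo ((n : ℝ) + 1) (n + 2) := by
  obtain ⟨h0, h1⟩ := hy
  unfold completeQuotient
  split_ifs <;> constructor <;> linarith

lemma TE_inv_completeQuotient {n : ℕ} {y : ℝ} (hy : y ∈ Ioo (0 : ℝ) 1) :
    TE (completeQuotient n y)⁻¹ = y := by
  have hq := completeQuotient_mem_Ioo (n := n) hy
  rw [TE, aE_eq_of_inv_mem_Ico (by rw [inv_inv]; exact Ioo_subset_Ico_self hq), one_div,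
    inv_inv, completeQuotient]
  split_ifs
  · push_cast
    rw [show (n : ℝ) + 2 - y - (n + 2) = -y by ring, abs_neg, abs_of_pos hy.1]
  · push_cast
    rw [show (n : ℝ) + 1 + y - (n + 1) = y by ring, abs_of_pos hy.1]

lemma preimage_TE_inter_branchDomain {A : Set ℝ} (hA : A ⊆ Ioo 0 1) (n : ℕ) :
    TE ⁻¹' A ∩ branchDomain n = (fun y => (completeQuotient n y)⁻¹) '' A := by
  ext x
  constructor
  · rintro ⟨hxA, hx⟩
    exact ⟨TE x, hxA, by dsimp only; rw [completeQuotient_TE hx, inv_inv]⟩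
  · rintro ⟨y, hy, rfl⟩
    refine ⟨?_, ?_⟩
    · rwa [mem_preimage, TE_inv_completeQuotient (hA hy)]
    · rw [branchDomain, mem_preimage, inv_inv]
      exact Ioo_subset_Ico_self (completeQuotient_mem_Ioo (hA hy))

lemma hasDerivAt_completeQuotient (n : ℕ) (y : ℝ) :
    HasDerivAt (completeQuotient n) (if Even n then -1 else 1) y := by
  unfold completeQuotient
  split_ifs
  · simpa using (hasDerivAt_id y).const_sub ((n : ℝ) + 2)
  · simpa using (hasDerivAt_id y).const_add ((n : ℝ) + 1)

@[fun_prop]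
lemma measurable_completeQuotient (n : ℕ) : Measurable (completeQuotient n) :=
  (continuous_iff_continuousAt.2 fun y => (hasDerivAt_completeQuotient n y).continuousAt).measurable

lemma completeQuotient_injective (n : ℕ) : Injective (completeQuotient n) := by
  intro a b h
  unfold completeQuotient at h
  split_ifs at h <;> linarith

lemma muE_preimage_TE_inter_branchDomain {A : Set ℝ} (hA : MeasurableSet A)
    (hA01 : A ⊆ Ioo 0 1) (n : ℕ) :
    muE (TE ⁻¹' A ∩ branchDomain n) = ∫⁻ y in A,
      ENNReal.ofReal ((completeQuotient n y - 1)⁻¹ - (completeQuotient n y + 1)⁻¹) := by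
  have hq : ∀ y ∈ A, 1 < completeQuotient n y := fun y hy =>
    (le_add_of_nonneg_left n.cast_nonneg).trans_lt (completeQuotient_mem_Ioo (hA01 hy)).1
  have himage : (fun y => (completeQuotient n y)⁻¹) '' A ⊆ Ioo 0 1 := by
    rintro _ ⟨y, hy, rfl⟩
    exact ⟨inv_pos.2 (zero_lt_one.trans (hq y hy)), inv_lt_one_of_one_lt₀ (hq y hy)⟩
  rw [muE_apply ((measurable_TE hA).inter (measurableSet_branchDomain n)),
    preimage_TE_inter_branchDomain hA01, inter_eq_left.2 himage,
    lintegral_image_inv_eq_lintegral_abs_deriv_div_sq_mul hA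
      (fun y _ => (hasDerivAt_completeQuotient n y).hasDerivWithinAt)
      (fun y hy => (zero_lt_one.trans (hq y hy)).ne') (completeQuotient_injective n).injOn]
  refine setLIntegral_congr_fun hA fun y hy => ?_
  rw [← ENNReal.ofReal_mul (by positivity), ← inv_sq_mul_densityE_inv (hq y hy)]
  split_ifs <;> simp

lemma tsum_ofReal_completeQuotient {y : ℝ} (hy : y ∈ Ioo (0 : ℝ) 1) :
    ∑' n, ENNReal.ofReal ((completeQuotient n y - 1)⁻¹ - (completeQuotient n y + 1)⁻¹)
      = ENNReal.ofReal (densityE y) := by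
  have heven : ∀ k : ℕ, completeQuotient (2 * k) y = 2 * k + (1 - y) + 1 := fun k => by
    simp [completeQuotient]
    ring
  have hodd : ∀ k : ℕ, completeQuotient (2 * k + 1) y = 2 * k + (1 + y) + 1 := fun k => by
    simp [completeQuotient, parity_simps]
    ring
  have hsucc : ∀ a : ℝ, a + 1 + 1 = a + 2 := fun a => by ring
  rw [← tsum_even_add_odd ENNReal.summable ENNReal.summable]
  simp_rw [heven, hodd, add_sub_cancel_right, hsucc]
  rw [ENNReal.tsum_ofReal_inv_two_mul_add_sub_inv (by linarith [hy.2]),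
    ENNReal.tsum_ofReal_inv_two_mul_add_sub_inv (by linarith [hy.1]), densityE, one_div,
    one_div, add_comm,
    ENNReal.ofReal_add (inv_nonneg.2 (by linarith [hy.1])) (inv_nonneg.2 (by linarith [hy.2]))]

/-- `μ_e` is an infinite, σ-finite, `T_e`-invariant measure on `(0,1)`. -/
theorem muE_infinite_sigmaFinite_invariant :
    muE Set.univ = ⊤ ∧
    SigmaFinite muE ∧
    ∀ A : Set ℝ, MeasurableSet A → A ⊆ Ioo (0 : ℝ) 1 →
      muE (TE ⁻¹' A) = muE A := by
  refine ⟨muE_univ, by unfold muE; infer_instance, fun A hA hA01 => ?_⟩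
  calc muE (TE ⁻¹' A)
      = ∑' n, muE (TE ⁻¹' A ∩ branchDomain n) :=
        muE_eq_tsum_inter_branchDomain (measurable_TE hA)
    _ = ∑' n, ∫⁻ y in A,
          ENNReal.ofReal ((completeQuotient n y - 1)⁻¹ - (completeQuotient n y + 1)⁻¹) := by
        simp_rw [muE_preimage_TE_inter_branchDomain hA hA01]
    _ = ∫⁻ y in A, ENNReal.ofReal (densityE y) := by
        rw [← lintegral_tsum fun n => by fun_prop]
        exact setLIntegral_congr_fun hA fun y hy => tsum_ofReal_completeQuotient (hA01 hy)
    _ = muE A := by rw [muE_apply hA, inter_eq_left.2 hA01]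
end
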